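/- arXiv:2505.08654 — 8 statements merged into one kernel-verified Lean document; each statement's English description precedes it below -/
import Mathlib

section
/- Unbiasedness of the all-observation leverage-effect estimator with respect to microstructure noise (bias part of Proposition 1): Let n and k be positive integers, let x_0, …, x_n be real numbers, and let ε_0, …, ε_n be i.i.d. real random variables with E[ε_0] = 0 and E[|ε_0|^3] < ∞. Set Y_i = x_i + ε_i for i = 0, …, n. For any real sequence z define L(z) = Σ_{i=k+1}^{n−k−2} (z_{i+1} − z_i) · ( Σ_{j=i+2}^{i+k+1} (z_{j+1} − z_j)^2 − Σ_{j=i−k−1}^{i−2} (z_{j+1} − z_j)^2 ). Then E[L(Y)] = L(x). -/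
open MeasureTheory ProbabilityTheory Filter

/-- The all-observation leverage-effect raw sum `L(z)` (the estimator of
Aït-Sahalia et al. with spot-volatility windows shifted outward by one
observation, up to the normalization `1/(k Δₙ)`). -/
noncomputable def allObsLE (n k : ℕ) (z : ℕ → ℝ) : ℝ :=
  ∑ i ∈ Finset.Icc (k + 1) (n - k - 2),
    (z (i + 1) - z i) *
      ((∑ j ∈ Finset.Icc (i + 2) (i + k + 1), (z (j + 1) - z j) ^ 2) -
        ∑ j ∈ Finset.Icc (i - k - 1) (i - 2), (z (j + 1) - z j) ^ 2)

/-- Unbiasedness of the all-observation leverage-effect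
estimator with respect to i.i.d. microstructure noise: if `Y i = x i + ε i`
with `(ε i)` i.i.d., mean zero and with finite third absolute moment, then
`E[L(Y)] = L(x)`. -/
theorem allObsLE_unbiased_wrt_noise
    {Ω : Type*} [MeasurableSpace Ω] (μ : Measure Ω) [IsProbabilityMeasure μ]
    (n k : ℕ) (hn : 0 < n) (hk : 0 < k) (x : ℕ → ℝ) (ε : ℕ → Ω → ℝ)
    (hmeas : ∀ i, Measurable (ε i))
    (hindep : iIndepFun ε μ)
    (hident : ∀ i, IdentDistrib (ε i) (ε 0) μ μ)
    (hmean : ∫ ω, ε 0 ω ∂μ = 0)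
    (hmom3 : Integrable (fun ω => |ε 0 ω| ^ 3) μ) :
    ∫ ω, allObsLE n k (fun i => x i + ε i ω) ∂μ = allObsLE n k x := by
  -- basic moment facts
  have habs3 : ∀ j, Integrable (fun ω => |ε j ω| ^ 3) μ := by
    intro j
    have h : IdentDistrib (fun ω => |ε j ω| ^ 3) (fun ω => |ε 0 ω| ^ 3) μ μ :=
      (hident j).comp ((measurable_id.abs).pow_const 3)
    exact h.integrable_iff.mpr hmom3
  have int1 : ∀ j, Integrable (ε j) μ := by
    intro j
    refine Integrable.mono' ((integrable_const (1 : ℝ)).add (habs3 j))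
      (hmeas j).aestronglyMeasurable (Filter.Eventually.of_forall fun ω => ?_)
    simp only [Pi.add_apply]
    have h0 : (0 : ℝ) ≤ |ε j ω| := abs_nonneg _
    rcases le_or_gt (|ε j ω|) 1 with h | h
    · simp only [Real.norm_eq_abs]
      nlinarith [pow_nonneg h0 3]
    · simp only [Real.norm_eq_abs]
      nlinarith [sq_nonneg (|ε j ω|)]
  have int2 : ∀ j, Integrable (fun ω => ε j ω ^ 2) μ := by
    intro j
    refine Integrable.mono' ((integrable_const (1 : ℝ)).add (habs3 j))
      (((hmeas j).pow_const 2).aestronglyMeasurable)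
      (Filter.Eventually.of_forall fun ω => ?_)
    simp only [Pi.add_apply]
    have h0 : (0 : ℝ) ≤ |ε j ω| := abs_nonneg _
    have hsq : ε j ω ^ 2 = |ε j ω| ^ 2 := (sq_abs _).symm
    rw [Real.norm_eq_abs, abs_of_nonneg (sq_nonneg _), hsq]
    rcases le_or_gt (|ε j ω|) 1 with h | h
    · nlinarith [pow_nonneg h0 3]
    · nlinarith [sq_nonneg (|ε j ω|)]
  have intmul : ∀ j l, Integrable (fun ω => ε j ω * ε l ω) μ := by
    intro j l
    refine Integrable.mono' ((int2 j).add (int2 l))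
      (((hmeas j).mul (hmeas l)).aestronglyMeasurable)
      (Filter.Eventually.of_forall fun ω => ?_)
    simp only [Pi.add_apply]
    rw [Real.norm_eq_abs, abs_mul]
    nlinarith [sq_nonneg (|ε j ω| - |ε l ω|), abs_nonneg (ε j ω), abs_nonneg (ε l ω),
      sq_abs (ε j ω), sq_abs (ε l ω)]
  have hmean' : ∀ j, ∫ ω, ε j ω ∂μ = 0 := fun j => ((hident j).integral_eq).trans hmean
  have hvar : ∀ j, ∫ ω, ε j ω ^ 2 ∂μ = ∫ ω, ε 0 ω ^ 2 ∂μ := fun j =>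
    ((hident j).comp (measurable_id.pow_const 2)).integral_eq
  have hcross : ∀ j l, j ≠ l → ∫ ω, ε j ω * ε l ω ∂μ = 0 := by
    intro j l hjl
    have h := (hindep.indepFun hjl).integral_fun_mul_eq_mul_integral (hmeas j).aestronglyMeasurable
      (hmeas l).aestronglyMeasurable
    calc ∫ ω, ε j ω * ε l ω ∂μ = (∫ ω, ε j ω ∂μ) * ∫ ω, ε l ω ∂μ := h
      _ = 0 := by rw [hmean' j, hmean' l]; ring
  -- squared increments
  have sqint : ∀ j : ℕ,
      Integrable (fun ω => ((x (j+1) + ε (j+1) ω) - (x j + ε j ω)) ^ 2) μ := by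
    intro j
    have hrw : (fun ω => ((x (j+1) + ε (j+1) ω) - (x j + ε j ω)) ^ 2)
        = fun ω => ((((x (j+1) - x j) ^ 2
            + (2 * (x (j+1) - x j)) * ε (j+1) ω)
            - (2 * (x (j+1) - x j)) * ε j ω)
            - 2 * (ε j ω * ε (j+1) ω))
            + (ε (j+1) ω ^ 2 + ε j ω ^ 2) := by
      funext ω; ring
    rw [hrw]
    exact (((((integrable_const _).add ((int1 (j+1)).const_mul _)).sub
      ((int1 j).const_mul _)).sub ((intmul j (j+1)).const_mul 2)).add
      ((int2 (j+1)).add (int2 j)))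
  have sqval : ∀ j : ℕ,
      ∫ ω, ((x (j+1) + ε (j+1) ω) - (x j + ε j ω)) ^ 2 ∂μ
        = (x (j+1) - x j) ^ 2 + 2 * ∫ ω, ε 0 ω ^ 2 ∂μ := by
    intro j
    have hrw : (fun ω => ((x (j+1) + ε (j+1) ω) - (x j + ε j ω)) ^ 2)
        = fun ω => ((((x (j+1) - x j) ^ 2
            + (2 * (x (j+1) - x j)) * ε (j+1) ω)
            - (2 * (x (j+1) - x j)) * ε j ω)
            - 2 * (ε j ω * ε (j+1) ω))
            + (ε (j+1) ω ^ 2 + ε j ω ^ 2) := by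
      funext ω; ring
    have I1 : Integrable (fun ω => (x (j+1) - x j) ^ 2
        + (2 * (x (j+1) - x j)) * ε (j+1) ω) μ :=
      (integrable_const _).add ((int1 (j+1)).const_mul _)
    have I2 : Integrable (fun ω => ((x (j+1) - x j) ^ 2
        + (2 * (x (j+1) - x j)) * ε (j+1) ω) - (2 * (x (j+1) - x j)) * ε j ω) μ :=
      I1.sub ((int1 j).const_mul _)
    have I3 : Integrable (fun ω => (((x (j+1) - x j) ^ 2
        + (2 * (x (j+1) - x j)) * ε (j+1) ω) - (2 * (x (j+1) - x j)) * ε j ω)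
        - 2 * (ε j ω * ε (j+1) ω)) μ :=
      I2.sub ((intmul j (j+1)).const_mul 2)
    have I4 : Integrable (fun ω => ε (j+1) ω ^ 2 + ε j ω ^ 2) μ :=
      (int2 (j+1)).add (int2 j)
    rw [show ∫ ω, ((x (j+1) + ε (j+1) ω) - (x j + ε j ω)) ^ 2 ∂μ
        = ∫ ω, (((((x (j+1) - x j) ^ 2
            + (2 * (x (j+1) - x j)) * ε (j+1) ω)
            - (2 * (x (j+1) - x j)) * ε j ω)
            - 2 * (ε j ω * ε (j+1) ω))
            + (ε (j+1) ω ^ 2 + ε j ω ^ 2)) ∂μ from by rw [← hrw]]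
    rw [integral_add I3 I4,
      integral_sub I2 ((intmul j (j+1)).const_mul 2),
      integral_sub I1 ((int1 j).const_mul _),
      integral_add (integrable_const _) ((int1 (j+1)).const_mul _),
      integral_add (int2 (j+1)) (int2 j),
      integral_const, integral_const_mul, integral_const_mul, integral_const_mul,
      hmean' j, hmean' (j+1), hcross j (j+1) (by omega), hvar j, hvar (j+1)]
    simp
    ring
  -- the per-term computation
  have key : ∀ i ∈ Finset.Icc (k+1) (n-k-2),
      Integrable (fun ω => ((x (i+1) + ε (i+1) ω) - (x i + ε i ω)) *
        ((∑ j ∈ Finset.Icc (i+2) (i+k+1), ((x (j+1) + ε (j+1) ω) - (x j + ε j ω)) ^ 2) -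
          ∑ j ∈ Finset.Icc (i-k-1) (i-2), ((x (j+1) + ε (j+1) ω) - (x j + ε j ω)) ^ 2)) μ ∧
      ∫ ω, ((x (i+1) + ε (i+1) ω) - (x i + ε i ω)) *
        ((∑ j ∈ Finset.Icc (i+2) (i+k+1), ((x (j+1) + ε (j+1) ω) - (x j + ε j ω)) ^ 2) -
          ∑ j ∈ Finset.Icc (i-k-1) (i-2), ((x (j+1) + ε (j+1) ω) - (x j + ε j ω)) ^ 2) ∂μ
        = (x (i+1) - x i) *
          ((∑ j ∈ Finset.Icc (i+2) (i+k+1), (x (j+1) - x j) ^ 2) -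
            ∑ j ∈ Finset.Icc (i-k-1) (i-2), (x (j+1) - x j) ^ 2) := by
    intro i hi
    have hik : k + 1 ≤ i := (Finset.mem_Icc.mp hi).1
    set A : Ω → ℝ := fun ω => (x (i+1) + ε (i+1) ω) - (x i + ε i ω) with hA
    set B : Ω → ℝ := fun ω =>
      (∑ j ∈ Finset.Icc (i+2) (i+k+1), ((x (j+1) + ε (j+1) ω) - (x j + ε j ω)) ^ 2) -
        ∑ j ∈ Finset.Icc (i-k-1) (i-2), ((x (j+1) + ε (j+1) ω) - (x j + ε j ω)) ^ 2 with hB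
    -- independence of A and B
    set S : Finset ℕ := {i, i+1} with hS
    set T : Finset ℕ := Finset.Icc (i-k-1) (i-1) ∪ Finset.Icc (i+2) (i+k+2) with hT
    have hST : Disjoint S T := by
      rw [Finset.disjoint_left]
      intro a haS haT
      simp only [hS, hT, Finset.mem_insert, Finset.mem_singleton, Finset.mem_union,
        Finset.mem_Icc] at haS haT
      omega
    have base := hindep.indepFun_finset S T hST hmeas
    set eT : (T → ℝ) → ℕ → ℝ := fun v j => if h : j ∈ T then v ⟨j, h⟩ else 0 with heTdef
    have meT : ∀ j, Measurable fun v : T → ℝ => eT v j := by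
      intro j
      by_cases h : j ∈ T
      · simp only [heTdef, dif_pos h]
        exact measurable_pi_apply _
      · simp only [heTdef, dif_neg h]
        exact measurable_const
    set gA : (S → ℝ) → ℝ := fun v =>
      (x (i+1) + v ⟨i+1, by simp [hS]⟩) - (x i + v ⟨i, by simp [hS]⟩) with hgA
    set gB : (T → ℝ) → ℝ := fun v =>
      (∑ j ∈ Finset.Icc (i+2) (i+k+1), ((x (j+1) + eT v (j+1)) - (x j + eT v j)) ^ 2) -
        ∑ j ∈ Finset.Icc (i-k-1) (i-2), ((x (j+1) + eT v (j+1)) - (x j + eT v j)) ^ 2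
      with hgB
    have mgA : Measurable gA :=
      (measurable_const.add (measurable_pi_apply _)).sub
        (measurable_const.add (measurable_pi_apply _))
    have mgB : Measurable gB := by
      refine Measurable.sub ?_ ?_ <;>
        exact Finset.measurable_sum _ fun j _ =>
          ((measurable_const.add (meT (j+1))).sub (measurable_const.add (meT j))).pow_const 2
    have hAeq : A = (fun v : S → ℝ => gA v) ∘ (fun ω (p : S) => ε p ω) := by
      funext ω; simp [hA, hgA, Function.comp]
    have hBeq : B = (fun v : T → ℝ => gB v) ∘ (fun ω (p : T) => ε p ω) := by
      funext ω
      simp only [hB, hgB, Function.comp_apply]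
      have hval : ∀ j : ℕ, j ∈ T → eT (fun p : T => ε p ω) j = ε j ω := by
        intro j hj; simp only [heTdef, dif_pos hj]
      congr 1
      · refine Finset.sum_congr rfl fun j hj => ?_
        rw [Finset.mem_Icc] at hj
        rw [hval j (by simp only [hT, Finset.mem_union, Finset.mem_Icc]; omega),
          hval (j+1) (by simp only [hT, Finset.mem_union, Finset.mem_Icc]; omega)]
      · refine Finset.sum_congr rfl fun j hj => ?_
        rw [Finset.mem_Icc] at hj
        rw [hval j (by simp only [hT, Finset.mem_union, Finset.mem_Icc]; omega),
          hval (j+1) (by simp only [hT, Finset.mem_union, Finset.mem_Icc]; omega)]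
    have hAB : IndepFun A B μ := by
      rw [hAeq, hBeq]
      exact base.comp mgA mgB
    have intA : Integrable A μ :=
      ((integrable_const _).add (int1 (i+1))).sub ((integrable_const _).add (int1 i))
    have intB : Integrable B μ :=
      (integrable_finset_sum _ fun j _ => sqint j).sub
        (integrable_finset_sum _ fun j _ => sqint j)
    have EA : ∫ ω, A ω ∂μ = x (i+1) - x i := by
      have J1 : Integrable (fun ω => x (i+1) + ε (i+1) ω) μ :=
        (integrable_const _).add (int1 (i+1))
      have J2 : Integrable (fun ω => x i + ε i ω) μ :=
        (integrable_const _).add (int1 i)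
      simp only [hA]
      rw [integral_sub J1 J2,
        integral_add (integrable_const _) (int1 (i+1)),
        integral_add (integrable_const _) (int1 i),
        hmean' (i+1), hmean' i, integral_const, integral_const]
      simp
    have EB : ∫ ω, B ω ∂μ =
        (∑ j ∈ Finset.Icc (i+2) (i+k+1), (x (j+1) - x j) ^ 2) -
          ∑ j ∈ Finset.Icc (i-k-1) (i-2), (x (j+1) - x j) ^ 2 := by
      simp only [hB]
      rw [integral_sub (integrable_finset_sum _ fun j _ => sqint j)
          (integrable_finset_sum _ fun j _ => sqint j),
        integral_finset_sum _ fun j _ => sqint j,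
        integral_finset_sum _ fun j _ => sqint j]
      simp only [sqval]
      rw [Finset.sum_add_distrib, Finset.sum_add_distrib, Finset.sum_const,
        Finset.sum_const, Nat.card_Icc, Nat.card_Icc,
        show i + k + 1 + 1 - (i + 2) = k from by omega,
        show i - 2 + 1 - (i - k - 1) = k from by omega]
      ring
    refine ⟨hAB.integrable_mul intA intB, ?_⟩
    calc ∫ ω, A ω * B ω ∂μ = (∫ ω, A ω ∂μ) * ∫ ω, B ω ∂μ :=
          hAB.integral_fun_mul_eq_mul_integral intA.aestronglyMeasurable intB.aestronglyMeasurable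
      _ = _ := by rw [EA, EB]
  -- assemble
  simp only [allObsLE]
  rw [integral_finset_sum _ fun i hi => (key i hi).1]
  exact Finset.sum_congr rfl fun i hi => (key i hi).2
end

section
/- Unbiasedness of the SALE (subsampling-and-averaging leverage effect) estimator under stationary q-dependent noise: Let q ≥ 0 be an integer and let (ε_i)_{i∈ℤ} be a strictly stationary, q-dependent sequence of real random variables with E[ε_0] = 0 and E[|ε_0|^3] < ∞. Let n, H, k be positive integers with 2q < H. Let x_0, …, x_n be real numbers and set Y_i = x_i + ε_i. For an offset h ∈ {1, …, H} put n_{H,h} = ⌊(n − h + 1)/H⌋ and, for any real sequence z, define T^{(h)}(z) = Σ_{i=k+1}^{n_{H,h}−k−2} (z_{(i+1)H+h−1} − z_{iH+h−1}) · ( Σ_{j=i+2}^{i+k+1} (z_{(j+1)H+h−1} − z_{jH+h−1})^2 − Σ_{j=i−k−1}^{i−2} (z_{(j+1)H+h−1} − z_{jH+h−1})^2 ). Then E[T^{(h)}(Y)] = T^{(h)}(x) for every offset h, and consequently the SALE estimator, which is the average over h = 1, …, H of the normalized subsample estimators T^{(h)}/(kHΔ_n), satisfies E[SALE(Y)] =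 SALE(x). -/
open MeasureTheory ProbabilityTheory Filter

/-- A two-sided sequence of real random variables is strictly stationary if
all its finite-dimensional distributions are shift invariant. -/
def StrictlyStationary {Ω : Type*} [MeasurableSpace Ω] (μ : Measure Ω)
    (ε : ℤ → Ω → ℝ) : Prop :=
  ∀ (m : ℕ) (idx : Fin m → ℤ) (s : ℤ),
    IdentDistrib (fun ω (t : Fin m) => ε (idx t + s) ω)
      (fun ω (t : Fin m) => ε (idx t) ω) μ μ

/-- A two-sided sequence of real random variables is `q`-dependent if the
families indexed by `A` and `B` are independent whenever all indices of `A`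
are at distance greater than `q` from all indices of `B`. -/
def QDependent {Ω : Type*} [MeasurableSpace Ω] (μ : Measure Ω)
    (ε : ℤ → Ω → ℝ) (q : ℕ) : Prop :=
  ∀ A B : Set ℤ, (∀ a ∈ A, ∀ b ∈ B, (q : ℤ) < |a - b|) →
    IndepFun (fun ω (a : A) => ε a ω) (fun ω (b : B) => ε b ω) μ

/-- The subsample leverage-effect raw sum `T^{(h)}(z)` for the subsample of
scale `H` and offset `h` (the subsample estimator up to the normalization
`1/(k H Δₙ)`), using only observations at indices `j*H + h - 1`. -/
noncomputable def subsampleT (n H k h : ℕ) (z : ℕ → ℝ) : ℝ :=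
  ∑ i ∈ Finset.Icc (k + 1) ((n + 1 - h) / H - k - 2),
    (z ((i + 1) * H + (h - 1)) - z (i * H + (h - 1))) *
      ((∑ j ∈ Finset.Icc (i + 2) (i + k + 1),
          (z ((j + 1) * H + (h - 1)) - z (j * H + (h - 1))) ^ 2) -
        ∑ j ∈ Finset.Icc (i - k - 1) (i - 2),
          (z ((j + 1) * H + (h - 1)) - z (j * H + (h - 1))) ^ 2)

/-- The SALE estimator: the average over the offsets `h = 1, …, H` of the
normalized subsample estimators `T^{(h)}/(k H Δ)`. -/
noncomputable def SALE (n H k : ℕ) (Δ : ℝ) (z : ℕ → ℝ) : ℝ :=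
  (1 / (H : ℝ)) * ∑ h ∈ Finset.Icc 1 H, subsampleT n H k h z / ((k : ℝ) * (H : ℝ) * Δ)

set_option maxHeartbeats 1600000 in
/-- Key lemma: each subsample raw sum applied to the noisy observations is
integrable, and its expectation is the raw sum of the noise-free observations. -/
theorem subsample_key
    {Ω : Type*} [MeasurableSpace Ω] (μ : Measure Ω) [IsProbabilityMeasure μ]
    (q : ℕ) (ε : ℤ → Ω → ℝ)
    (hmeas : ∀ i, Measurable (ε i))
    (hstat : StrictlyStationary μ ε)
    (hqdep : QDependent μ ε q)
    (hmean : ∫ ω, ε 0 ω ∂μ = 0)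
    (hmom3 : Integrable (fun ω => |ε 0 ω| ^ 3) μ)
    (n H k h : ℕ) (hH : 0 < H) (hk : 0 < k) (hqH : 2 * q < H)
    (x : ℕ → ℝ) :
    Integrable (fun ω => subsampleT n H k h (fun i => x i + ε (i : ℤ) ω)) μ ∧
    ∫ ω, subsampleT n H k h (fun i => x i + ε (i : ℤ) ω) ∂μ = subsampleT n H k h x := by
  classical
  -- one-dimensional stationarity consequences
  have hB : ∀ a : ℤ, IdentDistrib (ε a) (ε 0) μ μ := by
    intro a
    have := (hstat 1 (fun _ => 0) a).comp (measurable_pi_apply 0)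
    simpa [Function.comp_def] using this
  have hε3 : ∀ a : ℤ, Integrable (fun ω => |ε a ω| ^ 3) μ := fun a =>
    (((hB a).comp (measurable_abs.pow_const 3)).integrable_iff).mpr hmom3
  have hε1 : ∀ a : ℤ, Integrable (ε a) μ := by
    intro a
    refine ((hε3 a).add (integrable_const 1)).mono' (hmeas a).aestronglyMeasurable ?_
    filter_upwards with ω
    simp only [Pi.add_apply]
    rw [Real.norm_eq_abs]
    nlinarith [abs_nonneg (ε a ω), mul_nonneg (abs_nonneg (ε a ω)) (sq_nonneg (|ε a ω| - 1)),
      sq_nonneg (|ε a ω| - 1)]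
  have hε2 : ∀ a : ℤ, Integrable (fun ω => (ε a ω) ^ 2) μ := by
    intro a
    refine ((hε3 a).add (integrable_const 1)).mono'
      (((hmeas a).pow_const 2).aestronglyMeasurable) ?_
    filter_upwards with ω
    simp only [Pi.add_apply]
    rw [Real.norm_eq_abs, abs_of_nonneg (sq_nonneg _)]
    nlinarith [abs_nonneg (ε a ω), sq_abs (ε a ω),
      mul_nonneg (mul_nonneg (abs_nonneg (ε a ω)) (abs_nonneg (ε a ω))) (abs_nonneg (ε a ω)),
      sq_nonneg (|ε a ω| - 1), mul_nonneg (sq_nonneg (ε a ω)) (abs_nonneg (ε a ω))]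
  have hεmul : ∀ a b : ℤ, Integrable (fun ω => ε a ω * ε b ω) μ := by
    intro a b
    refine ((hε2 a).add (hε2 b)).mono' (((hmeas a).mul (hmeas b)).aestronglyMeasurable) ?_
    filter_upwards with ω
    simp only [Pi.add_apply]
    rw [Real.norm_eq_abs, abs_mul]
    nlinarith [sq_nonneg (|ε a ω| - |ε b ω|), sq_abs (ε a ω), sq_abs (ε b ω),
      abs_nonneg (ε a ω), abs_nonneg (ε b ω), mul_nonneg (abs_nonneg (ε a ω)) (abs_nonneg (ε b ω))]
  have hmean' : ∀ a : ℤ, ∫ ω, ε a ω ∂μ = 0 := fun a => ((hB a).integral_eq).trans hmean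
  -- the reference noise increment
  set W : Ω → ℝ := fun ω => ε (H : ℤ) ω - ε 0 ω with hW
  have hWint : Integrable W μ := (hε1 _).sub (hε1 _)
  have hWmean : ∫ ω, W ω ∂μ = 0 := by
    rw [hW]
    rw [integral_sub (hε1 _) (hε1 _), hmean', hmean', sub_zero]
  have hWsqint : Integrable (fun ω => (W ω) ^ 2) μ := by
    have e : (fun ω => (W ω) ^ 2)
        = fun ω => ((ε (H : ℤ) ω) ^ 2 - 2 * (ε (H : ℤ) ω * ε 0 ω)) + (ε 0 ω) ^ 2 := by
      funext ω; simp only [hW]; ring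
    rw [e]
    exact ((hε2 _).sub ((hεmul _ _).const_mul 2)).add (hε2 _)
  set c₂ := ∫ ω, (W ω) ^ 2 ∂μ with hc₂
  have hCint : ∀ p : ℝ, Integrable (fun ω => (p + W ω) ^ 2) μ := by
    intro p
    have e : (fun ω => (p + W ω) ^ 2) = fun ω => (p ^ 2 + (2 * p) * W ω) + (W ω) ^ 2 := by
      funext ω; ring
    rw [e]
    exact ((integrable_const _).add (hWint.const_mul _)).add hWsqint
  have hCval : ∀ p : ℝ, ∫ ω, (p + W ω) ^ 2 ∂μ = p ^ 2 + c₂ := by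
    intro p
    have e : (fun ω => (p + W ω) ^ 2) = fun ω => (p ^ 2 + (2 * p) * W ω) + (W ω) ^ 2 := by
      funext ω; ring
    have i0 : Integrable (fun ω => (2 * p) * W ω) μ := hWint.const_mul _
    have i1 : Integrable (fun ω => p ^ 2 + (2 * p) * W ω) μ := (integrable_const _).add i0
    rw [show (∫ ω, (p + W ω) ^ 2 ∂μ) = ∫ ω, ((p ^ 2 + (2 * p) * W ω) + (W ω) ^ 2) ∂μ by rw [← e],
      integral_add i1 hWsqint, integral_add (integrable_const _) i0,
      integral_const_mul, hWmean, integral_const]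
    simp [hc₂]
  have hC1 : ∀ p : ℝ, ∫ ω, (p + W ω) ∂μ = p := by
    intro p
    rw [integral_add (integrable_const _) hWint, hWmean, integral_const]
    simp
  -- the increments of the noisy observations along the subsample
  set m := (n + 1 - h) / H - k - 2 with hm
  set D : ℕ → Ω → ℝ := fun j ω =>
    (x ((j + 1) * H + (h - 1)) + ε (((j + 1) * H + (h - 1) : ℕ) : ℤ) ω) -
      (x (j * H + (h - 1)) + ε ((j * H + (h - 1) : ℕ) : ℤ) ω) with hD
  set G : ℕ → Ω → ℝ := fun i ω =>
    (∑ j ∈ Finset.Icc (i + 2) (i + k + 1), (D j ω) ^ 2) -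
      ∑ j ∈ Finset.Icc (i - k - 1) (i - 2), (D j ω) ^ 2 with hG
  have hTY : ∀ ω : Ω, subsampleT n H k h (fun i => x i + ε (i : ℤ) ω)
      = ∑ i ∈ Finset.Icc (k + 1) m, D i ω * G i ω := by
    intro ω; rfl
  have hDid : ∀ j : ℕ, IdentDistrib (D j)
      (fun ω => (x ((j + 1) * H + (h - 1)) - x (j * H + (h - 1))) + W ω) μ μ := by
    intro j
    set p : ℝ := x ((j + 1) * H + (h - 1)) - x (j * H + (h - 1)) with hp
    set s : ℤ := ((j * H + (h - 1) : ℕ) : ℤ) with hs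
    have hu : Measurable (fun v : Fin 2 → ℝ => p + (v 0 - v 1)) :=
      ((measurable_pi_apply 0).sub (measurable_pi_apply 1)).const_add _
    have h2 := (hstat 2 ![(H : ℤ), 0] s).comp hu
    have e1 : (H : ℤ) + s = (((j + 1) * H + (h - 1) : ℕ) : ℤ) := by
      rw [hs]; push_cast; ring
    have e2 : (fun v : Fin 2 → ℝ => p + (v 0 - v 1))
        ∘ (fun ω (t : Fin 2) => ε (![(H : ℤ), 0] t + s) ω) = D j := by
      funext ω
      simp only [Function.comp_apply, Matrix.cons_val_zero, Matrix.cons_val_one,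
        Matrix.head_cons, zero_add, e1, hD, hp, hs]
      rw [show ((H : ℤ) + ((j * H + (h - 1) : ℕ) : ℤ)) = ((j * H + H + (h - 1) : ℕ) : ℤ) by
        push_cast; ring]
      ring
    have e3 : (fun v : Fin 2 → ℝ => p + (v 0 - v 1))
        ∘ (fun ω (t : Fin 2) => ε (![(H : ℤ), 0] t) ω) = fun ω => p + W ω := by
      funext ω
      simp only [Function.comp_apply, Matrix.cons_val_zero, Matrix.cons_val_one,
        Matrix.head_cons, hW]
    rw [e2, e3] at h2
    exact h2
  have hDint : ∀ j, Integrable (D j) μ := by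
    intro j
    exact (hDid j).integrable_iff.mpr ((integrable_const _).add hWint)
  have hDmean : ∀ j, ∫ ω, D j ω ∂μ = x ((j + 1) * H + (h - 1)) - x (j * H + (h - 1)) := by
    intro j
    rw [(hDid j).integral_eq]
    exact hC1 _
  have hDsqid : ∀ j, IdentDistrib (fun ω => (D j ω) ^ 2)
      (fun ω => ((x ((j + 1) * H + (h - 1)) - x (j * H + (h - 1))) + W ω) ^ 2) μ μ := by
    intro j
    exact (hDid j).comp (measurable_id.pow_const 2)
  have hDsqint : ∀ j, Integrable (fun ω => (D j ω) ^ 2) μ :=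
    fun j => (hDsqid j).integrable_iff.mpr (hCint _)
  have hDsqval : ∀ j, ∫ ω, (D j ω) ^ 2 ∂μ
      = (x ((j + 1) * H + (h - 1)) - x (j * H + (h - 1))) ^ 2 + c₂ :=
    fun j => ((hDsqid j).integral_eq).trans (hCval _)
  have hGint : ∀ i, Integrable (G i) μ := by
    intro i
    have := (integrable_finset_sum (Finset.Icc (i + 2) (i + k + 1))
        (fun j (_ : j ∈ Finset.Icc (i + 2) (i + k + 1)) => hDsqint j)).sub
      (integrable_finset_sum (Finset.Icc (i - k - 1) (i - 2))
        (fun j (_ : j ∈ Finset.Icc (i - k - 1) (i - 2)) => hDsqint j))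
    exact this
  have hGval : ∀ i, k + 1 ≤ i → ∫ ω, G i ω ∂μ =
      (∑ j ∈ Finset.Icc (i + 2) (i + k + 1),
        (x ((j + 1) * H + (h - 1)) - x (j * H + (h - 1))) ^ 2) -
      ∑ j ∈ Finset.Icc (i - k - 1) (i - 2),
        (x ((j + 1) * H + (h - 1)) - x (j * H + (h - 1))) ^ 2 := by
    intro i hi
    have cR : (Finset.Icc (i + 2) (i + k + 1)).card = k := by rw [Nat.card_Icc]; omega
    have cL : (Finset.Icc (i - k - 1) (i - 2)).card = k := by rw [Nat.card_Icc]; omega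
    simp only [hG]
    rw [integral_sub (integrable_finset_sum _ fun j _ => hDsqint j)
        (integrable_finset_sum _ fun j _ => hDsqint j),
      integral_finset_sum _ (fun j _ => hDsqint j),
      integral_finset_sum _ (fun j _ => hDsqint j)]
    simp only [hDsqval]
    rw [Finset.sum_add_distrib, Finset.sum_add_distrib, Finset.sum_const, Finset.sum_const,
      cR, cL]
    ring
  -- independence of the increment from the two blocks of squared increments
  have hindep : ∀ i, k + 1 ≤ i → IndepFun (D i) (G i) μ := by
    intro i hi
    have hi1 : (1 : ℕ) ≤ i := by omega
    set A : Set ℤ := {((i * H + (h - 1) : ℕ) : ℤ), (((i + 1) * H + (h - 1) : ℕ) : ℤ)} with hA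
    set B : Set ℤ := {b : ℤ | b ≤ (((i - 1) * H + (h - 1) : ℕ) : ℤ)
      ∨ (((i + 2) * H + (h - 1) : ℕ) : ℤ) ≤ b} with hB'
    have e1 : (((i - 1) * H + (h - 1) : ℕ) : ℤ)
        = (i : ℤ) * (H : ℤ) - (H : ℤ) + ((h - 1 : ℕ) : ℤ) := by
      push_cast [Nat.cast_sub hi1]; ring
    have e2 : (((i + 2) * H + (h - 1) : ℕ) : ℤ)
        = (i : ℤ) * (H : ℤ) + 2 * (H : ℤ) + ((h - 1 : ℕ) : ℤ) := by push_cast; ring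
    have e3 : ((i * H + (h - 1) : ℕ) : ℤ) = (i : ℤ) * (H : ℤ) + ((h - 1 : ℕ) : ℤ) := by
      push_cast; ring
    have e4 : (((i + 1) * H + (h - 1) : ℕ) : ℤ)
        = (i : ℤ) * (H : ℤ) + (H : ℤ) + ((h - 1 : ℕ) : ℤ) := by push_cast; ring
    have hq : (q : ℤ) < (H : ℤ) := by exact_mod_cast lt_of_le_of_lt (by omega : q ≤ 2 * q) hqH
    have hq0 : (0 : ℤ) ≤ (q : ℤ) := Int.natCast_nonneg q
    have hsep : ∀ α ∈ A, ∀ β ∈ B, (q : ℤ) < |α - β| := by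
      intro α hα β hβ
      have habs : ∀ z w : ℤ, (q : ℤ) < z - w ∨ (q : ℤ) < w - z → (q : ℤ) < |z - w| := by
        intro z w hzw
        rcases hzw with hzw | hzw
        · exact lt_of_lt_of_le hzw (le_abs_self _)
        · refine lt_of_lt_of_le hzw ?_
          rw [abs_sub_comm]; exact le_abs_self _
      simp only [hA, Set.mem_insert_iff, Set.mem_singleton_iff] at hα
      simp only [hB', Set.mem_setOf_eq] at hβ
      rcases hα with rfl | rfl <;> rcases hβ with hb | hb <;> apply habs
      · left; rw [e3]; rw [e1] at hb; linarith
      · right; rw [e3]; rw [e2] at hb; linarith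
      · left; rw [e4]; rw [e1] at hb; linarith
      · right; rw [e4]; rw [e2] at hb; linarith
    have hqd := hqdep A B hsep
    have hm1 : ((i * H + (h - 1) : ℕ) : ℤ) ∈ A := Set.mem_insert _ _
    have hm2 : (((i + 1) * H + (h - 1) : ℕ) : ℤ) ∈ A := Set.mem_insert_of_mem _ rfl
    have hmR : ∀ j : ℕ, i + 2 ≤ j → ((j * H + (h - 1) : ℕ) : ℤ) ∈ B := by
      intro j hj
      simp only [hB', Set.mem_setOf_eq]
      right
      have : (i + 2) * H + (h - 1) ≤ j * H + (h - 1) :=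
        Nat.add_le_add_right (Nat.mul_le_mul hj le_rfl) _
      exact_mod_cast this
    have hmL : ∀ j : ℕ, j ≤ i - 1 → ((j * H + (h - 1) : ℕ) : ℤ) ∈ B := by
      intro j hj
      simp only [hB', Set.mem_setOf_eq]
      left
      have : j * H + (h - 1) ≤ (i - 1) * H + (h - 1) :=
        Nat.add_le_add_right (Nat.mul_le_mul hj le_rfl) _
      exact_mod_cast this
    set φ : (A → ℝ) → ℝ := fun v =>
      (x ((i + 1) * H + (h - 1)) + v ⟨_, hm2⟩) - (x (i * H + (h - 1)) + v ⟨_, hm1⟩) with hφ'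
    have hφ : Measurable φ :=
      ((measurable_pi_apply _).const_add _).sub ((measurable_pi_apply _).const_add _)
    set V : (B → ℝ) → ℤ → ℝ := fun v b => if hb : b ∈ B then v ⟨b, hb⟩ else 0 with hV
    have hVmeas : ∀ b : ℤ, Measurable (fun v : B → ℝ => V v b) := by
      intro b
      by_cases hb : b ∈ B
      · simp only [hV, dif_pos hb]
        exact measurable_pi_apply _
      · simp only [hV, dif_neg hb]
        exact measurable_const
    set ψ : (B → ℝ) → ℝ := fun v =>
      (∑ j ∈ Finset.Icc (i + 2) (i + k + 1),
        ((x ((j + 1) * H + (h - 1)) + V v (((j + 1) * H + (h - 1) : ℕ) : ℤ))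
          - (x (j * H + (h - 1)) + V v ((j * H + (h - 1) : ℕ) : ℤ))) ^ 2)
      - ∑ j ∈ Finset.Icc (i - k - 1) (i - 2),
        ((x ((j + 1) * H + (h - 1)) + V v (((j + 1) * H + (h - 1) : ℕ) : ℤ))
          - (x (j * H + (h - 1)) + V v ((j * H + (h - 1) : ℕ) : ℤ))) ^ 2 with hψ'
    have hψ : Measurable ψ := by
      rw [hψ']
      refine Measurable.sub ?_ ?_ <;>
        exact Finset.measurable_sum _ (fun j _ =>
          (((hVmeas _).const_add _).sub ((hVmeas _).const_add _)).pow_const 2)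
    have hcomp := hqd.comp hφ hψ
    have eφ : φ ∘ (fun ω (a : A) => ε a ω) = D i := by
      funext ω
      simp only [Function.comp_apply, hφ', hD]
    have eψ : ψ ∘ (fun ω (b : B) => ε b ω) = G i := by
      funext ω
      simp only [Function.comp_apply, hψ', hG, hD]
      refine congrArg₂ (· - ·) ?_ ?_ <;> refine Finset.sum_congr rfl (fun j hj => ?_)
      · have hj1 := (Finset.mem_Icc.mp hj).1
        simp only [hV]
        rw [dif_pos (hmR (j + 1) (by omega)), dif_pos (hmR j hj1)]
      · have hj2 := (Finset.mem_Icc.mp hj).2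
        simp only [hV]
        rw [dif_pos (hmL (j + 1) (by omega)), dif_pos (hmL j (by omega))]
    rw [eφ, eψ] at hcomp
    exact hcomp
  have hprodint : ∀ i, k + 1 ≤ i → Integrable (fun ω => D i ω * G i ω) μ := by
    intro i hi
    have := (hindep i hi).integrable_mul (hDint i) (hGint i)
    exact this
  have hprodval : ∀ i, k + 1 ≤ i → ∫ ω, D i ω * G i ω ∂μ
      = (x ((i + 1) * H + (h - 1)) - x (i * H + (h - 1))) * ∫ ω, G i ω ∂μ := by
    intro i hi
    rw [IndepFun.integral_fun_mul_eq_mul_integral (hindep i hi) (hDint i).aestronglyMeasurable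
        (hGint i).aestronglyMeasurable, hDmean i]
  constructor
  · have e : (fun ω => subsampleT n H k h (fun i => x i + ε (i : ℤ) ω))
        = fun ω => ∑ i ∈ Finset.Icc (k + 1) m, D i ω * G i ω := funext hTY
    rw [e]
    exact integrable_finset_sum _ fun i hi => hprodint i (Finset.mem_Icc.mp hi).1
  · simp only [hTY]
    rw [integral_finset_sum _ (fun i hi => hprodint i (Finset.mem_Icc.mp hi).1)]
    have erhs : subsampleT n H k h x = ∑ i ∈ Finset.Icc (k + 1) m,
        (x ((i + 1) * H + (h - 1)) - x (i * H + (h - 1))) *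
          ((∑ j ∈ Finset.Icc (i + 2) (i + k + 1),
            (x ((j + 1) * H + (h - 1)) - x (j * H + (h - 1))) ^ 2) -
          ∑ j ∈ Finset.Icc (i - k - 1) (i - 2),
            (x ((j + 1) * H + (h - 1)) - x (j * H + (h - 1))) ^ 2) := rfl
    rw [erhs]
    refine Finset.sum_congr rfl (fun i hi => ?_)
    have hi' := (Finset.mem_Icc.mp hi).1
    rw [hprodval i hi', hGval i hi']

/-- Unbiasedness of the SALE estimator under strictly
stationary `q`-dependent noise with `2q < H`: every subsample raw sum is
unbiased with respect to the noise, `E[T^{(h)}(Y)] = T^{(h)}(x)`, and hence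
`E[SALE(Y)] = SALE(x)`. -/
theorem SALE_unbiased_wrt_noise
    {Ω : Type*} [MeasurableSpace Ω] (μ : Measure Ω) [IsProbabilityMeasure μ]
    (q : ℕ) (ε : ℤ → Ω → ℝ)
    (hmeas : ∀ i, Measurable (ε i))
    (hstat : StrictlyStationary μ ε)
    (hqdep : QDependent μ ε q)
    (hmean : ∫ ω, ε 0 ω ∂μ = 0)
    (hmom3 : Integrable (fun ω => |ε 0 ω| ^ 3) μ)
    (n H k : ℕ) (hn : 0 < n) (hH : 0 < H) (hk : 0 < k) (hqH : 2 * q < H)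
    (x : ℕ → ℝ) (Δ : ℝ) (hΔ : 0 < Δ) :
    (∀ h ∈ Finset.Icc 1 H,
        ∫ ω, subsampleT n H k h (fun i => x i + ε (i : ℤ) ω) ∂μ =
          subsampleT n H k h x) ∧
      ∫ ω, SALE n H k Δ (fun i => x i + ε (i : ℤ) ω) ∂μ = SALE n H k Δ x := by
  have key : ∀ h : ℕ,
      Integrable (fun ω => subsampleT n H k h (fun i => x i + ε (i : ℤ) ω)) μ ∧
      ∫ ω, subsampleT n H k h (fun i => x i + ε (i : ℤ) ω) ∂μ = subsampleT n H k h x :=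
    fun h => subsample_key μ q ε hmeas hstat hqdep hmean hmom3 n H k h hH hk hqH x
  refine ⟨fun h _ => (key h).2, ?_⟩
  have e : (fun ω => SALE n H k Δ (fun i => x i + ε (i : ℤ) ω))
      = fun ω => (1 / (H : ℝ)) * ∑ h ∈ Finset.Icc 1 H,
          subsampleT n H k h (fun i => x i + ε (i : ℤ) ω) / ((k : ℝ) * (H : ℝ) * Δ) := rfl
  rw [e, integral_const_mul,
    integral_finset_sum _ (fun h _ => ((key h).1).div_const _)]
  unfold SALE
  congr 1
  refine Finset.sum_congr rfl (fun h _ => ?_)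
  rw [integral_div, (key h).2]
end

section
/- Residue-class identity for the multi-scale overlap kernel (claim in the proof of Proposition 4): For any positive integers H_p ≥ H_q and any integer d_0 with 0 ≤ d_0 ≤ H_q − 1, the kernel K_{p,q} satisfies Σ_{d∈ℤ, d ≡ d_0 (mod H_q)} K_{p,q}(d) = 1/H_q. -/
open Filter
open scoped Classical

/-- The multi-scale overlap kernel `K_{p,q} : ℤ → ℝ` for scales `Hp ≥ Hq`. -/
noncomputable def kernelK (Hp Hq : ℕ) (d : ℤ) : ℝ :=
  if -(Hq : ℤ) < d ∧ d < 0 then ((d : ℝ) + (Hq : ℝ)) / ((Hp : ℝ) * (Hq : ℝ))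
  else if 0 ≤ d ∧ d ≤ (Hp : ℤ) - (Hq : ℤ) then 1 / (Hp : ℝ)
  else if (Hp : ℤ) - (Hq : ℤ) < d ∧ d < (Hp : ℤ) then
    ((Hp : ℝ) - (d : ℝ)) / ((Hp : ℝ) * (Hq : ℝ))
  else 0

/-- Cast of `Int.toNat` to the reals for a nonnegative integer. -/
lemma toNat_cast_real (x : ℤ) (hx : 0 ≤ x) : ((x.toNat : ℕ) : ℝ) = (x : ℝ) := by
  exact_mod_cast congrArg (fun z : ℤ => (z : ℝ)) (Int.toNat_of_nonneg hx)

/-- The kernel is a (normalized) count of window-indicators. -/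
lemma kernelK_eq_sum (Hp Hq : ℕ) (hq : 0 < Hq) (hpq : Hq ≤ Hp) (d : ℤ) :
    kernelK Hp Hq d =
      ∑ a ∈ Finset.Ico (0 : ℤ) (Hp : ℤ),
        (if d ≤ a ∧ a < d + (Hq : ℤ) then 1 / ((Hp : ℝ) * (Hq : ℝ)) else 0) := by
  have hq' : (0 : ℤ) < (Hq : ℤ) := by exact_mod_cast hq
  have hpq' : (Hq : ℤ) ≤ (Hp : ℤ) := by exact_mod_cast hpq
  have hp' : (0 : ℤ) < (Hp : ℤ) := lt_of_lt_of_le hq' hpq'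
  have hpR : (0 : ℝ) < (Hp : ℝ) := by exact_mod_cast hp'
  have hqR : (0 : ℝ) < (Hq : ℝ) := by exact_mod_cast hq'
  rw [Finset.sum_ite, Finset.sum_const, Finset.sum_const_zero, add_zero]
  have hfil : (Finset.Ico (0 : ℤ) (Hp : ℤ)).filter
      (fun a => d ≤ a ∧ a < d + (Hq : ℤ)) =
      Finset.Ico (max 0 d) (min (Hp : ℤ) (d + (Hq : ℤ))) := by
    ext x
    simp only [Finset.mem_filter, Finset.mem_Ico, le_max_iff, max_le_iff, lt_min_iff]
    omega
  rw [hfil, Int.card_Ico]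
  unfold kernelK
  split_ifs with h1 h2 h3
  · have hmax : max (0 : ℤ) d = 0 := by omega
    have hmin : min (Hp : ℤ) (d + (Hq : ℤ)) = d + (Hq : ℤ) := by omega
    rw [hmax, hmin, nsmul_eq_mul]
    rw [show ((d + (Hq : ℤ) - 0).toNat : ℝ) = ((d : ℝ) + (Hq : ℝ)) by
      rw [toNat_cast_real _ (show (0:ℤ) ≤ d + (Hq : ℤ) - 0 by omega)]; push_cast; ring]
    field_simp
  · have hmax : max (0 : ℤ) d = d := by omega
    have hmin : min (Hp : ℤ) (d + (Hq : ℤ)) = d + (Hq : ℤ) := by omega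
    rw [hmax, hmin, nsmul_eq_mul]
    rw [show ((d + (Hq : ℤ) - d).toNat : ℝ) = (Hq : ℝ) by
      rw [toNat_cast_real _ (show (0:ℤ) ≤ d + (Hq : ℤ) - d by omega)]; push_cast; ring]
    field_simp
  · have hmax : max (0 : ℤ) d = d := by omega
    have hmin : min (Hp : ℤ) (d + (Hq : ℤ)) = (Hp : ℤ) := by omega
    rw [hmax, hmin, nsmul_eq_mul]
    rw [show (((Hp : ℤ) - d).toNat : ℝ) = ((Hp : ℝ) - (d : ℝ)) by
      rw [toNat_cast_real _ (show (0:ℤ) ≤ (Hp : ℤ) - d by omega)]; push_cast; ring]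
    ring
  · have : min (Hp : ℤ) (d + (Hq : ℤ)) - max (0 : ℤ) d ≤ 0 := by omega
    rw [show (min (Hp : ℤ) (d + (Hq : ℤ)) - max (0 : ℤ) d).toNat = 0 by omega]
    simp

/-- In each window `(a - Hq, a]` there is exactly one integer congruent to `d₀`. -/
lemma window_sum (Hq : ℕ) (hq : 0 < Hq) (d₀ : ℤ) (D : Finset ℤ) (a : ℤ) (c : ℝ)
    (hD : ∀ d : ℤ, a - (Hq : ℤ) < d → d ≤ a → d ∈ D) :
    ∑ d ∈ D, (if d ≡ d₀ [ZMOD (Hq : ℤ)] ∧ d ≤ a ∧ a < d + (Hq : ℤ) then c else 0) = c := by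
  have hq' : (0 : ℤ) < (Hq : ℤ) := by exact_mod_cast hq
  set r : ℤ := (a - d₀) % (Hq : ℤ) with hr
  have hr0 : 0 ≤ r := Int.emod_nonneg _ (by omega)
  have hr1 : r < (Hq : ℤ) := Int.emod_lt_of_pos _ hq'
  have hmem : a - r ∈ D := hD _ (by omega) (by omega)
  have hcong : a - r ≡ d₀ [ZMOD (Hq : ℤ)] := by
    rw [Int.modEq_iff_dvd]
    refine ⟨-((a - d₀) / (Hq : ℤ)), ?_⟩
    have h := Int.emod_add_mul_ediv (a - d₀) (Hq : ℤ)
    rw [mul_neg]; omega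
  rw [Finset.sum_eq_single_of_mem (a - r) hmem]
  · rw [if_pos ⟨hcong, by omega, by omega⟩]
  · intro d hd hne
    rw [if_neg]
    rintro ⟨h1, h2, h3⟩
    apply hne
    have hdvd : (Hq : ℤ) ∣ (a - r) - d := (h1.trans hcong.symm).dvd
    obtain ⟨k, hk⟩ := hdvd
    have hk0 : k = 0 := by
      rcases lt_trichotomy k 0 with h | h | h
      · nlinarith [mul_le_mul_of_nonneg_left (by omega : k ≤ -1) (le_of_lt hq')]
      · exact h
      · nlinarith [mul_le_mul_of_nonneg_left (by omega : 1 ≤ k) (le_of_lt hq')]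
    rw [hk0, mul_zero] at hk
    omega

/-- Residue-class identity for the multi-scale overlap
kernel: for any positive integers `Hp ≥ Hq` and any integer `d₀` with
`0 ≤ d₀ ≤ Hq − 1`, the total kernel mass carried by the residue class of `d₀`
modulo `Hq` is exactly `1/Hq`:
`Σ_{d ≡ d₀ (mod Hq)} K_{p,q}(d) = 1/Hq`. -/
theorem kernelK_residue_class_sum (Hp Hq : ℕ) (hq : 0 < Hq) (hpq : Hq ≤ Hp)
    (d₀ : ℤ) (hd₀ : 0 ≤ d₀) (hd₀' : d₀ ≤ (Hq : ℤ) - 1) :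
    HasSum (fun d : ℤ => if d ≡ d₀ [ZMOD (Hq : ℤ)] then kernelK Hp Hq d else 0)
      (1 / (Hq : ℝ)) := by
  have hq' : (0 : ℤ) < (Hq : ℤ) := by exact_mod_cast hq
  have hpq' : (Hq : ℤ) ≤ (Hp : ℤ) := by exact_mod_cast hpq
  have hp' : (0 : ℤ) < (Hp : ℤ) := lt_of_lt_of_le hq' hpq'
  have hpR : (0 : ℝ) < (Hp : ℝ) := by exact_mod_cast hp'
  have hqR : (0 : ℝ) < (Hq : ℝ) := by exact_mod_cast hq'
  set D : Finset ℤ := Finset.Icc (-(Hq : ℤ)) (Hp : ℤ) with hD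
  have hzero : ∀ d : ℤ, d ∉ D →
      (if d ≡ d₀ [ZMOD (Hq : ℤ)] then kernelK Hp Hq d else 0) = 0 := by
    intro d hd
    rw [Finset.mem_Icc, not_and_or, not_le, not_le] at hd
    have hK : kernelK Hp Hq d = 0 := by
      unfold kernelK
      rw [if_neg (by omega), if_neg (by omega), if_neg (by omega)]
    rw [hK, ite_self]
  have key : ∑ d ∈ D, (if d ≡ d₀ [ZMOD (Hq : ℤ)] then kernelK Hp Hq d else 0)
      = 1 / (Hq : ℝ) := by
    have step1 : ∀ d ∈ D, (if d ≡ d₀ [ZMOD (Hq : ℤ)] then kernelK Hp Hq d else 0)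
        = ∑ a ∈ Finset.Ico (0 : ℤ) (Hp : ℤ),
            (if d ≡ d₀ [ZMOD (Hq : ℤ)] ∧ d ≤ a ∧ a < d + (Hq : ℤ) then
              1 / ((Hp : ℝ) * (Hq : ℝ)) else 0) := by
      intro d _
      by_cases h : d ≡ d₀ [ZMOD (Hq : ℤ)]
      · simp only [h, true_and, if_true]
        exact kernelK_eq_sum Hp Hq hq hpq d
      · simp [h]
    rw [Finset.sum_congr rfl step1, Finset.sum_comm]
    have step2 : ∀ a ∈ Finset.Ico (0 : ℤ) (Hp : ℤ),
        ∑ d ∈ D, (if d ≡ d₀ [ZMOD (Hq : ℤ)] ∧ d ≤ a ∧ a < d + (Hq : ℤ) then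
          1 / ((Hp : ℝ) * (Hq : ℝ)) else 0) = 1 / ((Hp : ℝ) * (Hq : ℝ)) := by
      intro a ha
      rw [Finset.mem_Ico] at ha
      exact window_sum Hq hq d₀ D a _ (fun d h1 h2 => by
        rw [hD, Finset.mem_Icc]; omega)
    rw [Finset.sum_congr rfl step2, Finset.sum_const, Int.card_Ico, nsmul_eq_mul]
    rw [show (((Hp : ℤ) - 0).toNat : ℝ) = (Hp : ℝ) by
      rw [toNat_cast_real _ (show (0:ℤ) ≤ (Hp : ℤ) - 0 by omega)]; push_cast; ring]
    field_simp
  exact key ▸ hasSum_sum_of_ne_finset_zero hzero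
end

section
/- Explicit tridiagonal inverse of a min/max-structured matrix (Lemma 5): Let N ≥ 2 be an integer, m ∈ ℝ, and f, g : ℝ → ℝ. Define B ∈ ℝ^{N×N} by B_{p,q} = f( max(m+p, m+q) ) · g( min(m+p, m+q) ) / g( max(m+p, m+q) ) for p, q ∈ {1, …, N}, and h(p, q) = f(m+p) − (g(m+p)^2 / g(m+q)^2) · f(m+q). Assume g(m+p) ≠ 0 for all p ∈ {1, …, N}, h(p, p+1) ≠ 0 for all p ∈ {1, …, N−1}, and f(m+N) ≠ 0. Define A ∈ ℝ^{N×N} to be the tridiagonal matrix with A_{p,p+1} = A_{p+1,p} = − ( g(m+p)/g(m+p+1) ) / h(p, p+1) for p = 1, …, N−1, A_{1,1} = 1/h(1,2), A_{p,p} = h(p−1, p+1) / ( h(p−1, p) · h(p, p+1) ) for p = 2, …, N−1, A_{N,N} = ( f(m+N−1)/f(m+N) ) / h(N−1, N), and all other entries zero. Then B is invertible and B^{-1} = A; in particular A·B = B·A = I. -/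
open Matrix

private lemma sum_two_aux {N : ℕ} (φ : Fin N → ℝ) (a b : Fin N) (hab : a ≠ b)
    (hz : ∀ r, r ≠ a → r ≠ b → φ r = 0) : ∑ r, φ r = φ a + φ b := by
  classical
  rw [← Finset.sum_subset (Finset.subset_univ ({a, b} : Finset (Fin N)))]
  · rw [Finset.sum_insert (by simp [hab]), Finset.sum_singleton]
  · intro x _ hx
    simp only [Finset.mem_insert, Finset.mem_singleton, not_or] at hx
    exact hz x hx.1 hx.2

private lemma sum_three_aux {N : ℕ} (φ : Fin N → ℝ) (a b c : Fin N)
    (hab : a ≠ b) (hac : a ≠ c) (hbc : b ≠ c)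
    (hz : ∀ r, r ≠ a → r ≠ b → r ≠ c → φ r = 0) :
    ∑ r, φ r = φ a + (φ b + φ c) := by
  classical
  rw [← Finset.sum_subset (Finset.subset_univ ({a, b, c} : Finset (Fin N)))]
  · rw [Finset.sum_insert (by simp [hab, hac]), Finset.sum_insert (by simp [hbc]),
      Finset.sum_singleton]
  · intro x _ hx
    simp only [Finset.mem_insert, Finset.mem_singleton, not_or] at hx
    exact hz x hx.1 hx.2.1 hx.2.2

private lemma aux_r0_diag (u v α β d : ℝ) (hα : α ≠ 0) (hβ : β ≠ 0)
    (hd : d ≠ 0) (e : d = u - α^2/β^2*v) :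
    1/d * (u*α/α) + -(α/β)/d * (v*α/β) = 1 := by
  have hu : u = d + α^2/β^2*v := by rw [e]; ring
  rw [hu]; field_simp; ring

private lemma aux_r0_off (u v α β s t d : ℝ) (hβ : β ≠ 0) (ht : t ≠ 0)
    (hd : d ≠ 0) :
    1/d * (s*α/t) + -(α/β)/d * (s*β/t) = 0 := by
  field_simp; ring

private lemma aux_mid_low (u v w α β γ s d1 d2 d3 : ℝ)
    (hα : α ≠ 0) (hβ : β ≠ 0) (hγ : γ ≠ 0)
    (hd1 : d1 ≠ 0) (hd2 : d2 ≠ 0)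
    (e1 : d1 = u - α^2/β^2*v) (e2 : d2 = v - β^2/γ^2*w) (e3 : d3 = u - α^2/γ^2*w) :
    -(α/β)/d1 * (u*s/α) + (d3/(d1*d2) * (v*s/β) + -(β/γ)/d2 * (w*s/γ)) = 0 := by
  have h3 : d3 = d1 + α^2/β^2*d2 := by rw [e3, e1, e2]; field_simp; ring
  have hu : u = d1 + α^2/β^2*v := by rw [e1]; ring
  have hv : v = d2 + β^2/γ^2*w := by rw [e2]; ring
  rw [h3, hu, hv]; field_simp; ring

private lemma aux_mid_diag (u v w α β γ d1 d2 d3 : ℝ)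
    (hα : α ≠ 0) (hβ : β ≠ 0) (hγ : γ ≠ 0)
    (hd1 : d1 ≠ 0) (hd2 : d2 ≠ 0)
    (e1 : d1 = u - α^2/β^2*v) (e2 : d2 = v - β^2/γ^2*w) (e3 : d3 = u - α^2/γ^2*w) :
    -(α/β)/d1 * (v*α/β) + (d3/(d1*d2) * (v*β/β) + -(β/γ)/d2 * (w*β/γ)) = 1 := by
  have h3 : d3 = d1 + α^2/β^2*d2 := by rw [e3, e1, e2]; field_simp; ring
  have hv : v = d2 + β^2/γ^2*w := by rw [e2]; ring
  rw [h3, hv]; field_simp; ring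

private lemma aux_mid_high (u v w α β γ s t d1 d2 d3 : ℝ)
    (hα : α ≠ 0) (hβ : β ≠ 0) (hγ : γ ≠ 0) (ht : t ≠ 0)
    (hd1 : d1 ≠ 0) (hd2 : d2 ≠ 0)
    (e1 : d1 = u - α^2/β^2*v) (e2 : d2 = v - β^2/γ^2*w) (e3 : d3 = u - α^2/γ^2*w) :
    -(α/β)/d1 * (s*α/t) + (d3/(d1*d2) * (s*β/t) + -(β/γ)/d2 * (s*γ/t)) = 0 := by
  have h3 : d3 = d1 + α^2/β^2*d2 := by rw [e3, e1, e2]; field_simp; ring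
  rw [h3]; field_simp; ring

private lemma aux_last_low (u v α β s d : ℝ) (hα : α ≠ 0) (hβ : β ≠ 0) (hv : v ≠ 0)
    (hd : d ≠ 0) :
    -(α/β)/d * (u*s/α) + (u/v)/d * (v*s/β) = 0 := by
  field_simp; ring

private lemma aux_last_diag (u v α β d : ℝ) (hα : α ≠ 0) (hβ : β ≠ 0) (hv : v ≠ 0)
    (hd : d ≠ 0) (e : d = u - α^2/β^2*v) :
    -(α/β)/d * (v*α/β) + (u/v)/d * (v*β/β) = 1 := by
  have hu : u = d + α^2/β^2*v := by rw [e]; ring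
  rw [hu]; field_simp; ring

/-- **Lemma 5.** Explicit tridiagonal inverse of a
min/max-structured matrix: with `B p q = f(max(m+p, m+q)) · g(min(m+p, m+q))
/ g(max(m+p, m+q))` (indices `1, …, N`) and
`h(p,q) = f(m+p) − (g(m+p)²/g(m+q)²)·f(m+q)`, under the stated
nonvanishing conditions the tridiagonal matrix `A` given by the displayed
formulas is the two-sided inverse of `B`; in particular `B` is invertible
and `B⁻¹ = A`. -/
theorem tridiagonal_inverse_of_minmax_matrix
    (N : ℕ) (hN : 2 ≤ N) (m : ℝ) (f g : ℝ → ℝ)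
    (h : ℕ → ℕ → ℝ)
    (hdef : ∀ p q : ℕ, h p q =
      f (m + (p : ℝ)) - (g (m + (p : ℝ))) ^ 2 / (g (m + (q : ℝ))) ^ 2 * f (m + (q : ℝ)))
    (B : Matrix (Fin N) (Fin N) ℝ)
    (hB : ∀ p q : Fin N, B p q =
      f (max (m + ((p : ℕ) + 1 : ℝ)) (m + ((q : ℕ) + 1 : ℝ))) *
        g (min (m + ((p : ℕ) + 1 : ℝ)) (m + ((q : ℕ) + 1 : ℝ))) /
        g (max (m + ((p : ℕ) + 1 : ℝ)) (m + ((q : ℕ) + 1 : ℝ))))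
    (hg : ∀ p : ℕ, 1 ≤ p → p ≤ N → g (m + (p : ℝ)) ≠ 0)
    (hh : ∀ p : ℕ, 1 ≤ p → p ≤ N - 1 → h p (p + 1) ≠ 0)
    (hf : f (m + (N : ℝ)) ≠ 0)
    (A : Matrix (Fin N) (Fin N) ℝ)
    (hA : ∀ p q : Fin N, A p q =
      if (q : ℕ) = (p : ℕ) + 1 then
        -(g (m + ((p : ℕ) + 1 : ℝ)) / g (m + ((p : ℕ) + 2 : ℝ))) /
          h ((p : ℕ) + 1) ((p : ℕ) + 2)
      else if (p : ℕ) = (q : ℕ) + 1 then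
        -(g (m + ((q : ℕ) + 1 : ℝ)) / g (m + ((q : ℕ) + 2 : ℝ))) /
          h ((q : ℕ) + 1) ((q : ℕ) + 2)
      else if p = q then
        if (p : ℕ) = 0 then 1 / h 1 2
        else if (p : ℕ) = N - 1 then
          (f (m + ((N : ℝ) - 1)) / f (m + (N : ℝ))) / h (N - 1) N
        else
          h (p : ℕ) ((p : ℕ) + 2) /
            (h (p : ℕ) ((p : ℕ) + 1) * h ((p : ℕ) + 1) ((p : ℕ) + 2))
      else 0) :
    IsUnit B ∧ B⁻¹ = A ∧ A * B = 1 ∧ B * A = 1 := by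
  classical
  have hBle : ∀ p q : Fin N, (q : ℕ) ≤ (p : ℕ) →
      B p q = f (m + ((p:ℕ) + 1 : ℝ)) * g (m + ((q:ℕ) + 1 : ℝ)) / g (m + ((p:ℕ) + 1 : ℝ)) := by
    intro p q hqp
    have hle : m + ((q:ℕ) + 1 : ℝ) ≤ m + ((p:ℕ) + 1 : ℝ) := by
      have : ((q:ℕ):ℝ) ≤ ((p:ℕ):ℝ) := by exact_mod_cast hqp
      linarith
    rw [hB, max_eq_left hle, min_eq_right hle]
  have hBge : ∀ p q : Fin N, (p : ℕ) ≤ (q : ℕ) →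
      B p q = f (m + ((q:ℕ) + 1 : ℝ)) * g (m + ((p:ℕ) + 1 : ℝ)) / g (m + ((q:ℕ) + 1 : ℝ)) := by
    intro p q hpq
    have hle : m + ((p:ℕ) + 1 : ℝ) ≤ m + ((q:ℕ) + 1 : ℝ) := by
      have : ((p:ℕ):ℝ) ≤ ((q:ℕ):ℝ) := by exact_mod_cast hpq
      linarith
    rw [hB, max_eq_right hle, min_eq_left hle]
  have key : A * B = 1 := by
    ext p q
    rw [Matrix.mul_apply, Matrix.one_apply]
    by_cases hp0 : (p:ℕ) = 0
    · -- first row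
      have hb1 : (1:ℕ) < N := by omega
      set b : Fin N := ⟨1, hb1⟩ with hbdef
      have hbv : (b:ℕ) = 1 := rfl
      have hpb : p ≠ b := by
        intro hc; rw [Fin.ext_iff, hp0, hbv] at hc; omega
      have hz : ∀ r, r ≠ p → r ≠ b → A p r * B r q = 0 := by
        intro r hrp hrb
        have hrb' : (r:ℕ) ≠ 1 := by
          intro hc; exact hrb (Fin.ext_iff.mpr (hc.trans hbv.symm))
        have h1 : ¬ ((r:ℕ) = (p:ℕ) + 1) := by omega
        have h2 : ¬ ((p:ℕ) = (r:ℕ) + 1) := by omega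
        have h3 : ¬ (p = r) := fun hc => hrp hc.symm
        rw [hA, if_neg h1, if_neg h2, if_neg h3, zero_mul]
      rw [sum_two_aux (fun r => A p r * B r q) p b hpb hz]
      have hg1 : g (m + 1) ≠ 0 := by
        have := hg 1 le_rfl (by omega); norm_num at this; exact this
      have hg2 : g (m + 2) ≠ 0 := by
        have := hg 2 (by omega) (by omega); norm_num at this; exact this
      have hh1 : f (m+1) - g (m+1)^2 / g (m+2)^2 * f (m+2) ≠ 0 := by
        have := hh 1 le_rfl (by omega); rw [hdef] at this; norm_num at this; exact this
      have hApp : A p p = 1 / (f (m+1) - g (m+1)^2 / g (m+2)^2 * f (m+2)) := by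
        rw [hA, if_neg (by omega), if_neg (by omega), if_pos rfl, if_pos hp0, hdef]
        norm_num
      have hApb : A p b = -(g (m+1) / g (m+2)) / (f (m+1) - g (m+1)^2 / g (m+2)^2 * f (m+2)) := by
        rw [hA, if_pos (by omega : (b:ℕ) = (p:ℕ) + 1), hp0, hdef]
        norm_num
      by_cases hq0 : (q:ℕ) = 0
      · have hpq : p = q := Fin.ext_iff.mpr (by omega)
        rw [if_pos hpq]
        have hB1 : B p q = f (m+1) * g (m+1) / g (m+1) := by
          rw [hBle p q (by omega), hp0, hq0]; norm_num
        have hB2 : B b q = f (m+2) * g (m+1) / g (m+2) := by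
          rw [hBle b q (by omega), hbv, hq0]; norm_num
        rw [hApp, hApb, hB1, hB2]
        exact aux_r0_diag (f (m+1)) (f (m+2)) (g (m+1)) (g (m+2)) _ hg1 hg2 hh1 rfl
      · have hpq : ¬ p = q := by
          intro hc; rw [Fin.ext_iff, hp0] at hc; omega
        rw [if_neg hpq]
        have hgt : g (m + ((q:ℕ) + 1 : ℝ)) ≠ 0 := by
          have := hg ((q:ℕ)+1) (by omega) (by have := q.isLt; omega)
          push_cast at this; exact this
        have hB1 : B p q = f (m + ((q:ℕ)+1:ℝ)) * g (m+1) / g (m + ((q:ℕ)+1:ℝ)) := by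
          rw [hBge p q (by omega), hp0]; norm_num
        have hB2 : B b q = f (m + ((q:ℕ)+1:ℝ)) * g (m+2) / g (m + ((q:ℕ)+1:ℝ)) := by
          rw [hBge b q (by omega), hbv]; norm_num
        rw [hApp, hApb, hB1, hB2]
        exact aux_r0_off (f (m+1)) (f (m+2)) (g (m+1)) (g (m+2))
          (f (m + ((q:ℕ)+1:ℝ))) (g (m + ((q:ℕ)+1:ℝ))) _ hg2 hgt hh1
    by_cases hpl : (p:ℕ) = N - 1
    · -- last row
      obtain ⟨k, rfl⟩ : ∃ k, N = k + 2 := ⟨N - 2, by omega⟩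
      have hkv : (p:ℕ) = k + 1 := by omega
      have hak : k < k + 2 := by omega
      set a : Fin (k+2) := ⟨k, hak⟩ with hadef
      have hav : (a:ℕ) = k := rfl
      have hap : a ≠ p := by
        intro hc; rw [Fin.ext_iff, hav, hkv] at hc; omega
      have hz : ∀ r, r ≠ a → r ≠ p → A p r * B r q = 0 := by
        intro r hra hrp
        have hra' : (r:ℕ) ≠ k := by
          intro hc; exact hra (Fin.ext_iff.mpr (hc.trans hav.symm))
        have h1 : ¬ ((r:ℕ) = (p:ℕ) + 1) := by have := r.isLt; omega
        have h2 : ¬ ((p:ℕ) = (r:ℕ) + 1) := by omega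
        have h3 : ¬ (p = r) := fun hc => hrp hc.symm
        rw [hA, if_neg h1, if_neg h2, if_neg h3, zero_mul]
      rw [sum_two_aux (fun r => A p r * B r q) a p hap hz]
      have hgk1 : g (m + ((k:ℝ)+1)) ≠ 0 := by
        have := hg (k+1) (by omega) (by omega); push_cast at this; exact this
      have hgk2 : g (m + ((k:ℝ)+2)) ≠ 0 := by
        have := hg (k+2) (by omega) (by omega); push_cast at this; exact this
      have hhk : f (m + ((k:ℝ)+1)) - g (m + ((k:ℝ)+1))^2 / g (m + ((k:ℝ)+2))^2 * f (m + ((k:ℝ)+2)) ≠ 0 := by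
        have := hh (k+1) (by omega) (by omega)
        rw [hdef] at this; push_cast at this
        rw [show m + ((k:ℝ)+1+1) = m + ((k:ℝ)+2) by ring] at this
        exact this
      have hfv : f (m + ((k:ℝ)+2)) ≠ 0 := by
        push_cast at hf; exact hf
      have hApa : A p a = -(g (m + ((k:ℝ)+1)) / g (m + ((k:ℝ)+2))) /
          (f (m + ((k:ℝ)+1)) - g (m + ((k:ℝ)+1))^2 / g (m + ((k:ℝ)+2))^2 * f (m + ((k:ℝ)+2))) := by
        rw [hA, if_neg (by omega), if_pos (by omega : (p:ℕ) = (a:ℕ) + 1), hav, hdef]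
        push_cast
        try rw [show m + ((k:ℝ)+1+1) = m + ((k:ℝ)+2) by ring]
        all_goals rfl
      have hApp : A p p = (f (m + ((k:ℝ)+1)) / f (m + ((k:ℝ)+2))) /
          (f (m + ((k:ℝ)+1)) - g (m + ((k:ℝ)+1))^2 / g (m + ((k:ℝ)+2))^2 * f (m + ((k:ℝ)+2))) := by
        rw [hA, if_neg (by omega), if_neg (by omega), if_pos rfl, if_neg (by omega),
          if_pos (by omega : (p:ℕ) = k + 2 - 1), show (k+2-1 : ℕ) = k+1 by omega, hdef]
        push_cast
        try rw [show m + ((k:ℝ)+2-1) = m + ((k:ℝ)+1) by ring]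
        try rw [show m + ((k:ℝ)+1+1) = m + ((k:ℝ)+2) by ring]
        all_goals rfl
      by_cases hqk : (q:ℕ) ≤ k
      · have hpq : ¬ p = q := by
          intro hc; rw [Fin.ext_iff, hkv] at hc; omega
        rw [if_neg hpq]
        have hB1 : B a q = f (m + ((k:ℝ)+1)) * g (m + ((q:ℕ)+1:ℝ)) / g (m + ((k:ℝ)+1)) := by
          rw [hBle a q (by omega), hav]
        have hB2 : B p q = f (m + ((k:ℝ)+2)) * g (m + ((q:ℕ)+1:ℝ)) / g (m + ((k:ℝ)+2)) := by
          rw [hBle p q (by omega), hkv]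
          push_cast
          rw [show m + ((k:ℝ)+1+1) = m + ((k:ℝ)+2) by ring]
        rw [hApa, hApp, hB1, hB2]
        exact aux_last_low (f (m + ((k:ℝ)+1))) (f (m + ((k:ℝ)+2))) (g (m + ((k:ℝ)+1)))
          (g (m + ((k:ℝ)+2))) (g (m + ((q:ℕ)+1:ℝ))) _ hgk1 hgk2 hfv hhk
      · have hqv : (q:ℕ) = k + 1 := by have := q.isLt; omega
        have hpq : p = q := Fin.ext_iff.mpr (by omega)
        rw [if_pos hpq]
        have hB1 : B a q = f (m + ((k:ℝ)+2)) * g (m + ((k:ℝ)+1)) / g (m + ((k:ℝ)+2)) := by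
          rw [hBge a q (by omega), hav, hqv]
          push_cast
          rw [show m + ((k:ℝ)+1+1) = m + ((k:ℝ)+2) by ring]
        have hB2 : B p q = f (m + ((k:ℝ)+2)) * g (m + ((k:ℝ)+2)) / g (m + ((k:ℝ)+2)) := by
          rw [hBle p q (by omega), hkv, hqv]
          push_cast
          rw [show m + ((k:ℝ)+1+1) = m + ((k:ℝ)+2) by ring]
        rw [hApa, hApp, hB1, hB2]
        exact aux_last_diag (f (m + ((k:ℝ)+1))) (f (m + ((k:ℝ)+2))) (g (m + ((k:ℝ)+1)))
          (g (m + ((k:ℝ)+2))) _ hgk1 hgk2 hfv hhk rfl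
    · -- middle row
      obtain ⟨k, hkv⟩ : ∃ k, (p:ℕ) = k + 1 := ⟨(p:ℕ) - 1, by omega⟩
      have hkN : k + 3 ≤ N := by have := p.isLt; omega
      set a : Fin N := ⟨k, by omega⟩ with hadef
      set c : Fin N := ⟨k+2, by omega⟩ with hcdef
      have hav : (a:ℕ) = k := rfl
      have hcv : (c:ℕ) = k + 2 := rfl
      have hap : a ≠ p := by intro hc; rw [Fin.ext_iff, hav, hkv] at hc; omega
      have hac : a ≠ c := by intro hc; rw [Fin.ext_iff, hav, hcv] at hc; omega
      have hpc : p ≠ c := by intro hc; rw [Fin.ext_iff, hkv, hcv] at hc; omega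
      have hz : ∀ r, r ≠ a → r ≠ p → r ≠ c → A p r * B r q = 0 := by
        intro r hra hrp hrc
        have hra' : (r:ℕ) ≠ k := by
          intro hc; exact hra (Fin.ext_iff.mpr (hc.trans hav.symm))
        have hrc' : (r:ℕ) ≠ k + 2 := by
          intro hc; exact hrc (Fin.ext_iff.mpr (hc.trans hcv.symm))
        have h1 : ¬ ((r:ℕ) = (p:ℕ) + 1) := by omega
        have h2 : ¬ ((p:ℕ) = (r:ℕ) + 1) := by omega
        have h3 : ¬ (p = r) := fun hc => hrp hc.symm
        rw [hA, if_neg h1, if_neg h2, if_neg h3, zero_mul]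
      rw [sum_three_aux (fun r => A p r * B r q) a p c hap hac hpc hz]
      have hgk1 : g (m + ((k:ℝ)+1)) ≠ 0 := by
        have := hg (k+1) (by omega) (by omega); push_cast at this; exact this
      have hgk2 : g (m + ((k:ℝ)+2)) ≠ 0 := by
        have := hg (k+2) (by omega) (by omega); push_cast at this; exact this
      have hgk3 : g (m + ((k:ℝ)+3)) ≠ 0 := by
        have := hg (k+3) (by omega) (by omega); push_cast at this; exact this
      have hh1 : f (m + ((k:ℝ)+1)) - g (m + ((k:ℝ)+1))^2 / g (m + ((k:ℝ)+2))^2 * f (m + ((k:ℝ)+2)) ≠ 0 := by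
        have := hh (k+1) (by omega) (by omega)
        rw [hdef] at this; push_cast at this
        rw [show m + ((k:ℝ)+1+1) = m + ((k:ℝ)+2) by ring] at this
        exact this
      have hh2 : f (m + ((k:ℝ)+2)) - g (m + ((k:ℝ)+2))^2 / g (m + ((k:ℝ)+3))^2 * f (m + ((k:ℝ)+3)) ≠ 0 := by
        have := hh (k+2) (by omega) (by omega)
        rw [hdef] at this; push_cast at this
        rw [show m + ((k:ℝ)+2+1) = m + ((k:ℝ)+3) by ring] at this
        exact this
      have hApa : A p a = -(g (m + ((k:ℝ)+1)) / g (m + ((k:ℝ)+2))) /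
          (f (m + ((k:ℝ)+1)) - g (m + ((k:ℝ)+1))^2 / g (m + ((k:ℝ)+2))^2 * f (m + ((k:ℝ)+2))) := by
        rw [hA, if_neg (by omega), if_pos (by omega : (p:ℕ) = (a:ℕ) + 1), hav, hdef]
        push_cast
        try rw [show m + ((k:ℝ)+1+1) = m + ((k:ℝ)+2) by ring]
        all_goals rfl
      have hApc : A p c = -(g (m + ((k:ℝ)+2)) / g (m + ((k:ℝ)+3))) /
          (f (m + ((k:ℝ)+2)) - g (m + ((k:ℝ)+2))^2 / g (m + ((k:ℝ)+3))^2 * f (m + ((k:ℝ)+3))) := by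
        rw [hA, if_pos (by omega : (c:ℕ) = (p:ℕ) + 1), hkv, hdef]
        push_cast
        try rw [show m + ((k:ℝ)+1+1) = m + ((k:ℝ)+2) by ring]
        try rw [show m + ((k:ℝ)+1+2) = m + ((k:ℝ)+3) by ring]
        all_goals rfl
      have hApp : A p p = (f (m + ((k:ℝ)+1)) - g (m + ((k:ℝ)+1))^2 / g (m + ((k:ℝ)+3))^2 * f (m + ((k:ℝ)+3))) /
          ((f (m + ((k:ℝ)+1)) - g (m + ((k:ℝ)+1))^2 / g (m + ((k:ℝ)+2))^2 * f (m + ((k:ℝ)+2))) *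
           (f (m + ((k:ℝ)+2)) - g (m + ((k:ℝ)+2))^2 / g (m + ((k:ℝ)+3))^2 * f (m + ((k:ℝ)+3)))) := by
        rw [hA, if_neg (by omega), if_neg (by omega), if_pos rfl, if_neg (by omega),
          if_neg (by omega), hkv, hdef, hdef, hdef]
        push_cast
        try rw [show m + ((k:ℝ)+1+1) = m + ((k:ℝ)+2) by ring]
        try rw [show m + ((k:ℝ)+1+2) = m + ((k:ℝ)+3) by ring]
        all_goals rfl
      by_cases hqlo : (q:ℕ) ≤ k
      · have hpq : ¬ p = q := by intro hc; rw [Fin.ext_iff, hkv] at hc; omega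
        rw [if_neg hpq]
        have hB1 : B a q = f (m + ((k:ℝ)+1)) * g (m + ((q:ℕ)+1:ℝ)) / g (m + ((k:ℝ)+1)) := by
          rw [hBle a q (by omega), hav]
        have hB2 : B p q = f (m + ((k:ℝ)+2)) * g (m + ((q:ℕ)+1:ℝ)) / g (m + ((k:ℝ)+2)) := by
          rw [hBle p q (by omega), hkv]
          push_cast
          rw [show m + ((k:ℝ)+1+1) = m + ((k:ℝ)+2) by ring]
        have hB3 : B c q = f (m + ((k:ℝ)+3)) * g (m + ((q:ℕ)+1:ℝ)) / g (m + ((k:ℝ)+3)) := by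
          rw [hBle c q (by omega), hcv]
          push_cast
          rw [show m + ((k:ℝ)+2+1) = m + ((k:ℝ)+3) by ring]
        rw [hApa, hApp, hApc, hB1, hB2, hB3]
        exact aux_mid_low (f (m + ((k:ℝ)+1))) (f (m + ((k:ℝ)+2))) (f (m + ((k:ℝ)+3)))
          (g (m + ((k:ℝ)+1))) (g (m + ((k:ℝ)+2))) (g (m + ((k:ℝ)+3))) (g (m + ((q:ℕ)+1:ℝ)))
          _ _ _ hgk1 hgk2 hgk3 hh1 hh2 rfl rfl rfl
      by_cases hqd : (q:ℕ) = k + 1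
      · have hpq : p = q := Fin.ext_iff.mpr (by omega)
        rw [if_pos hpq]
        have hB1 : B a q = f (m + ((k:ℝ)+2)) * g (m + ((k:ℝ)+1)) / g (m + ((k:ℝ)+2)) := by
          rw [hBge a q (by omega), hav, hqd]
          push_cast
          rw [show m + ((k:ℝ)+1+1) = m + ((k:ℝ)+2) by ring]
        have hB2 : B p q = f (m + ((k:ℝ)+2)) * g (m + ((k:ℝ)+2)) / g (m + ((k:ℝ)+2)) := by
          rw [hBle p q (by omega), hkv, hqd]
          push_cast
          rw [show m + ((k:ℝ)+1+1) = m + ((k:ℝ)+2) by ring]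
        have hB3 : B c q = f (m + ((k:ℝ)+3)) * g (m + ((k:ℝ)+2)) / g (m + ((k:ℝ)+3)) := by
          rw [hBle c q (by omega), hcv, hqd]
          push_cast
          rw [show m + ((k:ℝ)+1+1) = m + ((k:ℝ)+2) by ring,
            show m + ((k:ℝ)+2+1) = m + ((k:ℝ)+3) by ring]
        rw [hApa, hApp, hApc, hB1, hB2, hB3]
        exact aux_mid_diag (f (m + ((k:ℝ)+1))) (f (m + ((k:ℝ)+2))) (f (m + ((k:ℝ)+3)))
          (g (m + ((k:ℝ)+1))) (g (m + ((k:ℝ)+2))) (g (m + ((k:ℝ)+3)))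
          _ _ _ hgk1 hgk2 hgk3 hh1 hh2 rfl rfl rfl
      · have hqhi : k + 2 ≤ (q:ℕ) := by omega
        have hpq : ¬ p = q := by intro hc; rw [Fin.ext_iff, hkv] at hc; omega
        rw [if_neg hpq]
        have hgt : g (m + ((q:ℕ)+1:ℝ)) ≠ 0 := by
          have := hg ((q:ℕ)+1) (by omega) (by have := q.isLt; omega)
          push_cast at this; exact this
        have hB1 : B a q = f (m + ((q:ℕ)+1:ℝ)) * g (m + ((k:ℝ)+1)) / g (m + ((q:ℕ)+1:ℝ)) := by
          rw [hBge a q (by omega), hav]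
        have hB2 : B p q = f (m + ((q:ℕ)+1:ℝ)) * g (m + ((k:ℝ)+2)) / g (m + ((q:ℕ)+1:ℝ)) := by
          rw [hBge p q (by omega), hkv]
          push_cast
          rw [show m + ((k:ℝ)+1+1) = m + ((k:ℝ)+2) by ring]
        have hB3 : B c q = f (m + ((q:ℕ)+1:ℝ)) * g (m + ((k:ℝ)+3)) / g (m + ((q:ℕ)+1:ℝ)) := by
          rw [hBge c q (by omega), hcv]
          push_cast
          rw [show m + ((k:ℝ)+2+1) = m + ((k:ℝ)+3) by ring]
        rw [hApa, hApp, hApc, hB1, hB2, hB3]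
        exact aux_mid_high (f (m + ((k:ℝ)+1))) (f (m + ((k:ℝ)+2))) (f (m + ((k:ℝ)+3)))
          (g (m + ((k:ℝ)+1))) (g (m + ((k:ℝ)+2))) (g (m + ((k:ℝ)+3)))
          (f (m + ((q:ℕ)+1:ℝ))) (g (m + ((q:ℕ)+1:ℝ)))
          _ _ _ hgk1 hgk2 hgk3 hgt hh1 hh2 rfl rfl rfl
  have hAs : ∀ p q : Fin N, A p q = A q p := by
    intro p q
    rcases eq_or_ne p q with rfl | hne
    · rfl
    rw [hA p q, hA q p]
    by_cases h1 : (q:ℕ) = (p:ℕ) + 1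
    · rw [if_pos h1, if_neg (by omega), if_pos h1]
    by_cases h2 : (p:ℕ) = (q:ℕ) + 1
    · rw [if_neg h1, if_pos h2, if_pos h2]
    · rw [if_neg h1, if_neg h2, if_neg hne, if_neg h2, if_neg h1, if_neg (Ne.symm hne)]
  have hBs : ∀ p q : Fin N, B p q = B q p := by
    intro p q
    rw [hB p q, hB q p, max_comm, min_comm]
  have hAT : Aᵀ = A := by
    ext p q; rw [Matrix.transpose_apply]; exact (hAs p q).symm
  have hBT : Bᵀ = B := by
    ext p q; rw [Matrix.transpose_apply]; exact (hBs p q).symm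
  have key2 : B * A = 1 := by
    have := congrArg Matrix.transpose key
    rwa [Matrix.transpose_mul, Matrix.transpose_one, hAT, hBT] at this
  refine ⟨?_, ?_, key, key2⟩
  · exact (Matrix.isUnit_iff_isUnit_det B).mpr (Matrix.isUnit_det_of_right_inverse key2)
  · exact Matrix.inv_eq_right_inv key2
end

section
/- Closed-form row sums of the inverse covariance matrix for f(x) = √x and g(x) = x (explicit weights in Section 5.1): Let N ≥ 2 be an integer and m > −1 a real number. Define B ∈ ℝ^{N×N} by B_{p,q} = min(m+p, m+q) / √( max(m+p, m+q) ). Define ω ∈ ℝ^N by ω_1 = ((m+2)/(m+1))^{1/2} / ( (m+2)^{3/2} − (m+1)^{3/2} ), ω_p = (m+p)^{1/2} · ( ( (m+p)^{1/2} − (m+p−1)^{1/2} ) / ( (m+p)^{3/2} − (m+p−1)^{3/2} ) − ( (m+p+1)^{1/2} − (m+p)^{1/2} ) / ( (m+p+1)^{3/2} − (m+p)^{3/2} ) ) for p = 2, …, N−1, and ω_N = (m+N)^{1/2} · ( (m+N)^{1/2} − (m+N−1)^{1/2} ) / ( (m+N)^{3/2} − (m+N−1)^{3/2} ). Then B·ω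 = 1_N, the all-ones vector; equivalently, ω = B^{-1} 1_N. -/
open Matrix Finset
namespace Stmt13

noncomputable def X (m : ℝ) (k : ℕ) : ℝ := m + k + 1
noncomputable def S (m : ℝ) (k : ℕ) : ℝ := Real.sqrt (X m k)
noncomputable def C (m : ℝ) (k : ℕ) : ℝ := X m k * S m k
noncomputable def A (m : ℝ) (k : ℕ) : ℝ := (S m (k+1) - S m k) / (C m (k+1) - C m k)

noncomputable def W (m : ℝ) (N : ℕ) (q : ℕ) : ℝ :=
  if q = 0 then (S m 1 / S m 0) / (C m 1 - C m 0)
  else if q = N - 1 then S m (N-1) * A m (N-2)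
  else S m q * (A m (q-1) - A m q)

variable {m : ℝ}

lemma hx (hm : -1 < m) (k : ℕ) : 0 < X m k := by
  have : (0:ℝ) ≤ k := Nat.cast_nonneg k
  unfold X; linarith

lemma hxlt (k : ℕ) : X m k < X m (k+1) := by
  unfold X; push_cast; linarith

lemma hs (hm : -1 < m) (k : ℕ) : 0 < S m k := Real.sqrt_pos.mpr (hx hm k)

lemma hsq (hm : -1 < m) (k : ℕ) : S m k ^ 2 = X m k := Real.sq_sqrt (hx hm k).le

lemma hslt (hm : -1 < m) (k : ℕ) : S m k < S m (k+1) :=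
  Real.sqrt_lt_sqrt (hx hm k).le (hxlt k)

lemma hclt (hm : -1 < m) (k : ℕ) : C m k < C m (k+1) :=
  mul_lt_mul'' (hxlt k) (hslt hm k) (hx hm k).le (hs hm k).le

lemma hden (hm : -1 < m) (k : ℕ) : C m (k+1) - C m k ≠ 0 := by
  have := hclt hm k; linarith

lemma ha (hm : -1 < m) (k : ℕ) : A m k * (C m (k+1) - C m k) = S m (k+1) - S m k :=
  div_mul_cancel₀ _ (hden hm k)

lemma r12 {y : ℝ} : y ^ ((1:ℝ)/2) = Real.sqrt y := (Real.sqrt_eq_rpow y).symm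

lemma r32 {y : ℝ} (hy : 0 < y) : y ^ ((3:ℝ)/2) = y * Real.sqrt y := by
  rw [show (3:ℝ)/2 = 1 + 1/2 by norm_num, Real.rpow_add hy, Real.rpow_one,
    Real.sqrt_eq_rpow]


lemma Wmid {N q : ℕ} (h0 : q ≠ 0) (h1 : q ≠ N - 1) :
    W m N q = S m q * (A m (q-1) - A m q) := by
  simp [W, h0, h1]

lemma lemA (hm : -1 < m) (n : ℕ) : ∀ k, k ≤ n →
    ∑ q ∈ range (k+1), X m q * W m (n+2) q = S m k - C m k * A m k := by
  intro k hk
  induction k with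
  | zero =>
    rw [range_one, sum_singleton]
    rw [show W m (n+2) 0 = (S m 1 / S m 0) / (C m 1 - C m 0) from by simp [W]]
    have hs0 := hs hm 0
    have hs1 := hs hm 1
    have hd := hden hm 0
    have hq0 := hsq hm 0
    have hq1 := hsq hm 1
    have hx10 : X m 1 = X m 0 + 1 := by unfold X; push_cast; ring
    have h10 : S m 1 ^ 2 = S m 0 ^ 2 + 1 := by rw [hq0, hq1, hx10]
    unfold A C at *
    field_simp
    rw [← hq0, ← hq1]
    have hinv : (S m 1 * S m 1 ^ 2 - S m 0 ^ 2 * S m 0) * (S m 1 * S m 1 ^ 2 - S m 0 ^ 2 * S m 0)⁻¹ = 1 :=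
      mul_inv_cancel₀ (by rw [hq0, hq1, mul_comm (S m 1)]; exact hd)
    linear_combination (-((S m 1 * S m 1 ^ 2 - S m 0 ^ 2 * S m 0)⁻¹ * S m 0 ^ 2 * S m 1)) * h10 + S m 0 ^ 2 * hinv
  | succ k ih =>
    have hk' : k ≤ n := by omega
    rw [sum_range_succ, ih hk']
    rw [Wmid (by omega) (by omega)]
    have h1 := ha hm k
    have h2 := ha hm (k+1)
    have hc : X m (k+1) * S m (k+1) = C m (k+1) := rfl
    have : X m (k+1) * (S m (k+1) * (A m k - A m (k+1))) = C m (k+1) * (A m k - A m (k+1)) := by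
      rw [← hc]; ring
    rw [show k + 1 - 1 = k from rfl] at *
    linear_combination this + h1

lemma lemA' (hm : -1 < m) (n : ℕ) :
    ∑ q ∈ range (n+2), X m q * W m (n+2) q = S m (n+1) := by
  rw [show n + 2 = (n+1) + 1 from rfl, sum_range_succ, lemA hm n n le_rfl]
  rw [show W m (n+2) (n+1) = S m (n+1) * A m n from by simp [W]]
  have h1 := ha hm n
  have hc : X m (n+1) * S m (n+1) = C m (n+1) := rfl
  have : X m (n+1) * (S m (n+1) * A m n) = C m (n+1) * A m n := by rw [← hc]; ring
  linear_combination this + h1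

lemma lemB (hm : -1 < m) (n : ℕ) : ∀ d j, j + d = n →
    ∑ q ∈ Ico (j+1) (n+2), W m (n+2) q / S m q = A m j := by
  intro d
  induction d with
  | zero =>
    intro j hj
    subst hj
    rw [show j + 2 = (j+1) + 1 from rfl, Finset.sum_Ico_succ_top (by omega), Finset.Ico_self,
      sum_empty, zero_add]
    rw [show W m (j+2) (j+1) = S m (j+1) * A m j from by simp [W]]
    have hne := (hs hm (j+1)).ne'
    field_simp
  | succ d ih =>
    intro j hj
    have h1 : j + 1 + d = n := by omega
    rw [← Finset.sum_Ico_consecutive _ (show j+1 ≤ j+2 by omega) (show j+2 ≤ n+2 by omega),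
      ih (j+1) h1]
    rw [show Finset.Ico (j+1) (j+2) = {j+1} from by ext t; simp only [Finset.mem_Ico, Finset.mem_singleton]; omega]
    rw [sum_singleton, Wmid (by omega) (by omega)]
    rw [show j + 1 - 1 = j from rfl]
    have hne := (hs hm (j+1)).ne'
    field_simp
    ring

lemma omega_eq {m : ℝ} (hm : -1 < m) (n : ℕ) (ω : Fin (n+2) → ℝ)
    (hω : ∀ p : Fin (n+2), ω p =
      if (p : ℕ) = 0 then
        ((m + 2) / (m + 1)) ^ ((1 : ℝ) / 2) /
          ((m + 2) ^ ((3 : ℝ) / 2) - (m + 1) ^ ((3 : ℝ) / 2))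
      else if (p : ℕ) = (n+2) - 1 then
        (m + ((n+2 : ℕ) : ℝ)) ^ ((1 : ℝ) / 2) *
          ((m + ((n+2:ℕ) : ℝ)) ^ ((1 : ℝ) / 2) - (m + ((n+2:ℕ) : ℝ) - 1) ^ ((1 : ℝ) / 2)) /
          ((m + ((n+2:ℕ) : ℝ)) ^ ((3 : ℝ) / 2) - (m + ((n+2:ℕ) : ℝ) - 1) ^ ((3 : ℝ) / 2))
      else
        (m + ((p : ℕ) + 1 : ℝ)) ^ ((1 : ℝ) / 2) *
          (((m + ((p : ℕ) + 1 : ℝ)) ^ ((1 : ℝ) / 2) -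
              (m + ((p : ℕ) : ℝ)) ^ ((1 : ℝ) / 2)) /
            ((m + ((p : ℕ) + 1 : ℝ)) ^ ((3 : ℝ) / 2) -
              (m + ((p : ℕ) : ℝ)) ^ ((3 : ℝ) / 2)) -
            ((m + ((p : ℕ) + 2 : ℝ)) ^ ((1 : ℝ) / 2) -
                (m + ((p : ℕ) + 1 : ℝ)) ^ ((1 : ℝ) / 2)) /
              ((m + ((p : ℕ) + 2 : ℝ)) ^ ((3 : ℝ) / 2) -
                (m + ((p : ℕ) + 1 : ℝ)) ^ ((3 : ℝ) / 2)))) :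
    ∀ p : Fin (n+2), ω p = W m (n+2) (p : ℕ) := by
  intro p
  rw [hω p]
  have hm1 : (0:ℝ) < m + 1 := by linarith
  have hm2 : (0:ℝ) < m + 2 := by linarith
  rcases Nat.eq_zero_or_pos (p : ℕ) with h0 | h0
  · rw [if_pos h0, h0]
    have k1 : X m 0 = m + 1 := by unfold X; push_cast; ring
    have k2 : X m 1 = m + 2 := by unfold X; push_cast; ring
    rw [show W m (n+2) 0 = (S m 1 / S m 0) / (C m 1 - C m 0) from by simp [W]]
    rw [r12, Real.sqrt_div hm2.le, r32 hm2, r32 hm1]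
    simp only [S, C, k1, k2]
  · have h0' : (p : ℕ) ≠ 0 := by omega
    rw [if_neg h0']
    by_cases hl : (p : ℕ) = n + 2 - 1
    · rw [if_pos hl, hl]
      have e1 : m + ((n+2:ℕ) : ℝ) = X m (n+1) := by unfold X; push_cast; ring
      have e2 : m + ((n+2:ℕ) : ℝ) - 1 = X m n := by unfold X; push_cast; ring
      rw [show W m (n+2) (n+2-1) = S m (n+1) * A m n from by simp [W]]
      rw [e2, e1]
      simp only [r12]
      rw [r32 (hx hm (n+1)), r32 (hx hm n)]
      simp only [S, C, A]
      rw [mul_div_assoc]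
    · rw [if_neg hl, Wmid h0' hl]
      have e0 : m + ((p:ℕ) : ℝ) = X m ((p:ℕ) - 1) := by
        unfold X; rw [Nat.cast_sub h0]; push_cast; ring
      have e2 : m + ((p:ℕ) + 2 : ℝ) = X m ((p:ℕ) + 1) := by unfold X; push_cast; ring
      have e1 : m + ((p:ℕ) + 1 : ℝ) = X m (p:ℕ) := by unfold X; push_cast; ring
      rw [e0, e2, e1]
      simp only [r12]
      rw [r32 (hx hm ((p:ℕ)-1)), r32 (hx hm ((p:ℕ)+1)), r32 (hx hm (p:ℕ))]
      have hp1 : (p:ℕ) - 1 + 1 = (p:ℕ) := by omega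
      simp only [S, C, A, hp1]

end Stmt13

open Stmt13 in
/-- Closed-form row sums of the inverse covariance matrix
for `f(x) = √x`, `g(x) = x`: with `B p q = min(m+p, m+q)/√(max(m+p, m+q))`
(indices `1, …, N`, `m > −1`), the explicit vector `ω` satisfies `B·ω = 1`,
i.e. `ω = B⁻¹ 1`. -/
theorem inverse_row_sums_sqrt_case
    (N : ℕ) (hN : 2 ≤ N) (m : ℝ) (hm : -1 < m)
    (B : Matrix (Fin N) (Fin N) ℝ)
    (hB : ∀ p q : Fin N, B p q =
      min (m + ((p : ℕ) + 1 : ℝ)) (m + ((q : ℕ) + 1 : ℝ)) /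
        Real.sqrt (max (m + ((p : ℕ) + 1 : ℝ)) (m + ((q : ℕ) + 1 : ℝ))))
    (ω : Fin N → ℝ)
    (hω : ∀ p : Fin N, ω p =
      if (p : ℕ) = 0 then
        ((m + 2) / (m + 1)) ^ ((1 : ℝ) / 2) /
          ((m + 2) ^ ((3 : ℝ) / 2) - (m + 1) ^ ((3 : ℝ) / 2))
      else if (p : ℕ) = N - 1 then
        (m + (N : ℝ)) ^ ((1 : ℝ) / 2) *
          ((m + (N : ℝ)) ^ ((1 : ℝ) / 2) - (m + (N : ℝ) - 1) ^ ((1 : ℝ) / 2)) /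
          ((m + (N : ℝ)) ^ ((3 : ℝ) / 2) - (m + (N : ℝ) - 1) ^ ((3 : ℝ) / 2))
      else
        (m + ((p : ℕ) + 1 : ℝ)) ^ ((1 : ℝ) / 2) *
          (((m + ((p : ℕ) + 1 : ℝ)) ^ ((1 : ℝ) / 2) -
              (m + ((p : ℕ) : ℝ)) ^ ((1 : ℝ) / 2)) /
            ((m + ((p : ℕ) + 1 : ℝ)) ^ ((3 : ℝ) / 2) -
              (m + ((p : ℕ) : ℝ)) ^ ((3 : ℝ) / 2)) -
            ((m + ((p : ℕ) + 2 : ℝ)) ^ ((1 : ℝ) / 2) -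
                (m + ((p : ℕ) + 1 : ℝ)) ^ ((1 : ℝ) / 2)) /
              ((m + ((p : ℕ) + 2 : ℝ)) ^ ((3 : ℝ) / 2) -
                (m + ((p : ℕ) + 1 : ℝ)) ^ ((3 : ℝ) / 2)))) :
    B.mulVec ω = fun _ => 1 := by
  obtain ⟨n, rfl⟩ : ∃ n, N = n + 2 := ⟨N - 2, by omega⟩
  have hωW : ∀ p : Fin (n+2), ω p = W m (n+2) (p : ℕ) := omega_eq hm n ω hω
  funext r
  have hBr : ∀ q : Fin (n+2), B r q * ω q =
      (if (q:ℕ) ≤ (r:ℕ) then X m (q:ℕ) / S m (r:ℕ) else X m (r:ℕ) / S m (q:ℕ))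
        * W m (n+2) (q:ℕ) := by
    intro q
    have a1 : m + ((q:ℕ) + 1 : ℝ) = X m (q:ℕ) := by unfold X; ring
    have a2 : m + ((r:ℕ) + 1 : ℝ) = X m (r:ℕ) := by unfold X; ring
    rw [hωW q, hB r q, a1, a2]
    rcases le_or_gt (q:ℕ) (r:ℕ) with h | h
    · have hle : X m (q:ℕ) ≤ X m (r:ℕ) := by
        unfold X
        have : ((q:ℕ):ℝ) ≤ ((r:ℕ):ℝ) := Nat.cast_le.mpr h
        linarith
      rw [min_eq_right hle, max_eq_left hle, if_pos h]
      rfl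
    · have hle : X m (r:ℕ) ≤ X m (q:ℕ) := by
        unfold X
        have : ((r:ℕ):ℝ) ≤ ((q:ℕ):ℝ) := Nat.cast_le.mpr h.le
        linarith
      rw [min_eq_left hle, max_eq_right hle, if_neg (by omega)]
      rfl
  have hsum : ∑ q : Fin (n+2), B r q * ω q =
      ∑ t ∈ Finset.range (n+2),
        (if t ≤ (r:ℕ) then X m t / S m (r:ℕ) else X m (r:ℕ) / S m t) * W m (n+2) t := by
    rw [← Fin.sum_univ_eq_sum_range
      (fun t => (if t ≤ (r:ℕ) then X m t / S m (r:ℕ) else X m (r:ℕ) / S m t) * W m (n+2) t)]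
    exact Finset.sum_congr rfl fun q _ => hBr q
  show ∑ q, B r q * ω q = 1
  rw [hsum]
  have hr2 : (r:ℕ) + 1 ≤ n + 2 := r.isLt
  rw [Finset.range_eq_Ico,
    ← Finset.sum_Ico_consecutive _ (Nat.zero_le ((r:ℕ)+1)) hr2]
  have hfirst : ∑ t ∈ Finset.Ico 0 ((r:ℕ)+1),
      (if t ≤ (r:ℕ) then X m t / S m (r:ℕ) else X m (r:ℕ) / S m t) * W m (n+2) t
      = (∑ t ∈ Finset.range ((r:ℕ)+1), X m t * W m (n+2) t) / S m (r:ℕ) := by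
    rw [← Finset.range_eq_Ico, Finset.sum_div]
    refine Finset.sum_congr rfl fun t ht => ?_
    rw [if_pos (by simpa [Nat.lt_succ_iff] using Finset.mem_range.mp ht)]
    ring
  have hsecond : ∑ t ∈ Finset.Ico ((r:ℕ)+1) (n+2),
      (if t ≤ (r:ℕ) then X m t / S m (r:ℕ) else X m (r:ℕ) / S m t) * W m (n+2) t
      = X m (r:ℕ) * ∑ t ∈ Finset.Ico ((r:ℕ)+1) (n+2), W m (n+2) t / S m t := by
    rw [Finset.mul_sum]
    refine Finset.sum_congr rfl fun t ht => ?_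
    rw [if_neg (by have := Finset.mem_Ico.mp ht; omega)]
    ring
  rw [hfirst, hsecond]
  by_cases hrn : (r:ℕ) = n + 1
  · rw [hrn, lemA' hm n, div_self (hs hm (n+1)).ne', Finset.Ico_self, Finset.sum_empty,
      mul_zero, add_zero]
  · have hrle : (r:ℕ) ≤ n := by omega
    rw [lemA hm n (r:ℕ) hrle, lemB hm n (n - (r:ℕ)) (r:ℕ) (by omega)]
    have hC : C m (r:ℕ) = X m (r:ℕ) * S m (r:ℕ) := rfl
    have hne := (hs hm (r:ℕ)).ne'
    field_simp
    linear_combination (-(A m (r:ℕ))) * hC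
end

section
/- Average of power sums of grid-partition segment lengths (Lemma 6): Let k ≥ 1 be an integer and l ∈ (0,1). For x ∈ (0, l], the grid with spacing l anchored so that its first cell has length x partitions the unit interval into segments of lengths x, l, l, …, l, a_m, where m(x) = ⌈(1 − x)/l⌉ and a_m(x) = 1 − x − (m(x) − 1)·l; define S_k(x, l) = x^k + (m(x) − 1)·l^k + a_m(x)^k, the sum of the k-th powers of all segment lengths. Then (1/l) ∫_0^l S_k(x, l) dx = l^{k−1} − ((k−1)/(k+1)) · l^k; equivalently, if α_1 is uniformly distributed on (0, l], then E[S_k(α_1, l)] = l^{k−1} − ((k−1)/(k+1)) l^k. -/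
open intervalIntegral

/-- **Lemma 6.** Average of power sums of grid-partition
segment lengths: for an integer `k ≥ 1` and `l ∈ (0,1)`, with
`m(x) = ⌈(1−x)/l⌉`, `a(x) = 1 − x − (m(x)−1)l` and
`S_k(x,l) = x^k + (m(x)−1)·l^k + a(x)^k`,
one has `(1/l) ∫₀^l S_k(x,l) dx = l^{k−1} − ((k−1)/(k+1))·l^k`. -/
theorem grid_partition_power_sum_average
    (k : ℕ) (hk : 1 ≤ k) (l : ℝ) (hl0 : 0 < l) (hl1 : l < 1) :
    (1 / l) *
        ∫ x in (0 : ℝ)..l,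
          (x ^ k + ((⌈(1 - x) / l⌉ : ℝ) - 1) * l ^ k +
            (1 - x - ((⌈(1 - x) / l⌉ : ℝ) - 1) * l) ^ k) =
      l ^ (k - 1) - ((k : ℝ) - 1) / ((k : ℝ) + 1) * l ^ k := by
  obtain ⟨j, rfl⟩ : ∃ j, k = j + 1 := ⟨k - 1, (Nat.succ_pred_eq_of_pos hk).symm⟩
  set N : ℤ := ⌈(1 : ℝ) / l⌉ with hN
  have hNl : 1 ≤ (N : ℝ) * l := by
    have h := Int.le_ceil ((1 : ℝ) / l)
    rw [← hN] at h
    rw [div_le_iff₀ hl0] at h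
    linarith
  have hNl' : ((N : ℝ) - 1) * l < 1 := by
    have h := Int.ceil_lt_add_one ((1 : ℝ) / l)
    rw [← hN] at h
    have : ((N : ℝ) - 1) < 1 / l := by linarith
    calc ((N : ℝ) - 1) * l < (1 / l) * l := by
          exact mul_lt_mul_of_pos_right this hl0
      _ = 1 := by field_simp
  set t : ℝ := 1 - ((N : ℝ) - 1) * l with ht
  have ht0 : 0 < t := by simp [ht]; linarith
  have htl : t ≤ l := by
    have : 1 ≤ ((N : ℝ) - 1) * l + l := by nlinarith
    simp [ht]; linarith
  -- ceiling values on the two pieces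
  have hceil1 : ∀ x : ℝ, 0 < x → x < t → (⌈(1 - x) / l⌉ : ℤ) = N := by
    intro x hx hxt
    rw [Int.ceil_eq_iff]
    constructor
    · rw [lt_div_iff₀ hl0]
      have : x < 1 - ((N : ℝ) - 1) * l := hxt
      push_cast
      nlinarith
    · rw [div_le_iff₀ hl0]
      push_cast
      nlinarith
  have hceil2 : ∀ x : ℝ, t ≤ x → x ≤ l → (⌈(1 - x) / l⌉ : ℤ) = N - 1 := by
    intro x hxt hxl
    rw [Int.ceil_eq_iff]
    constructor
    · rw [lt_div_iff₀ hl0]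
      push_cast
      nlinarith
    · rw [div_le_iff₀ hl0]
      have : 1 - ((N : ℝ) - 1) * l ≤ x := hxt
      push_cast
      nlinarith
  -- the two polynomial pieces
  set g₁ : ℝ → ℝ := fun x =>
    x ^ (j + 1) + ((N : ℝ) - 1) * l ^ (j + 1) + (t - x) ^ (j + 1) with hg₁
  set g₂ : ℝ → ℝ := fun x =>
    x ^ (j + 1) + ((N : ℝ) - 2) * l ^ (j + 1) + (t + l - x) ^ (j + 1) with hg₂
  set f : ℝ → ℝ := fun x =>
    x ^ (j + 1) + ((⌈(1 - x) / l⌉ : ℝ) - 1) * l ^ (j + 1) +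
      (1 - x - ((⌈(1 - x) / l⌉ : ℝ) - 1) * l) ^ (j + 1) with hf
  have hc3 : Continuous fun x : ℝ => (t - x) ^ (j + 1) := by fun_prop
  have hc4 : Continuous fun x : ℝ => (t + l - x) ^ (j + 1) := by fun_prop
  have hcont1 : Continuous g₁ := by
    rw [hg₁]; fun_prop
  have hcont2 : Continuous g₂ := by
    rw [hg₂]; fun_prop
  have heq1 : ∀ x ∈ Set.Ioc (0 : ℝ) t, f x = g₁ x := by
    intro x hx
    rcases eq_or_lt_of_le hx.2 with heq | hlt
    · have hc : (⌈(1 - x) / l⌉ : ℤ) = N - 1 := hceil2 x heq.ge (heq ▸ htl)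
      simp only [hf, hg₁, hc]
      push_cast
      have h1 : 1 - x - ((N : ℝ) - 1 - 1) * l = l := by rw [heq, ht]; ring
      rw [h1, heq, sub_self, zero_pow (Nat.succ_ne_zero j)]
      ring
    · have hc : (⌈(1 - x) / l⌉ : ℤ) = N := hceil1 x hx.1 hlt
      simp only [hf, hg₁, hc]
      have h1 : 1 - x - ((N : ℝ) - 1) * l = t - x := by rw [ht]; ring
      rw [h1]
  have heq2 : ∀ x ∈ Set.Ioc t l, f x = g₂ x := by
    intro x hx
    have hc : (⌈(1 - x) / l⌉ : ℤ) = N - 1 := hceil2 x hx.1.le hx.2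
    simp only [hf, hg₂, hc]
    push_cast
    have h1 : 1 - x - ((N : ℝ) - 1 - 1) * l = t + l - x := by rw [ht]; ring
    rw [h1]
    ring_nf
  -- integrability of f on the two pieces
  have hif1 : IntervalIntegrable f MeasureTheory.volume 0 t := by
    rw [intervalIntegrable_iff_integrableOn_Ioc_of_le ht0.le]
    exact ((hcont1.intervalIntegrable 0 t).1.mono_set (le_of_eq rfl)).congr_fun
      (fun x hx => (heq1 x hx).symm) measurableSet_Ioc
  have hif2 : IntervalIntegrable f MeasureTheory.volume t l := by
    rw [intervalIntegrable_iff_integrableOn_Ioc_of_le htl]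
    exact ((hcont2.intervalIntegrable t l).1.mono_set
        (le_of_eq rfl)).congr_fun (fun x hx => (heq2 x hx).symm) measurableSet_Ioc
  -- split and rewrite
  have hsplit : ∫ x in (0 : ℝ)..l, f x = (∫ x in (0 : ℝ)..t, f x) + ∫ x in t..l, f x :=
    (intervalIntegral.integral_add_adjacent_intervals hif1 hif2).symm
  have hI1 : ∫ x in (0 : ℝ)..t, f x = ∫ x in (0 : ℝ)..t, g₁ x := by
    apply intervalIntegral.integral_congr_ae
    apply Filter.Eventually.of_forall
    intro x hx
    rw [Set.uIoc_of_le ht0.le] at hx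
    exact heq1 x hx
  have hI2 : ∫ x in t..l, f x = ∫ x in t..l, g₂ x := by
    apply intervalIntegral.integral_congr_ae
    apply Filter.Eventually.of_forall
    intro x hx
    rw [Set.uIoc_of_le htl] at hx
    exact heq2 x hx
  -- compute the two polynomial integrals
  have hpow : ∀ a b : ℝ, ∫ x in a..b, x ^ (j + 1)
      = (b ^ (j + 2) - a ^ (j + 2)) / ((j : ℝ) + 2) := by
    intro a b
    rw [integral_pow]
    push_cast
    ring_nf
  have hJ1 : ∫ x in (0 : ℝ)..t, g₁ x
      = t ^ (j + 2) / ((j : ℝ) + 2) + ((N : ℝ) - 1) * l ^ (j + 1) * t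
        + t ^ (j + 2) / ((j : ℝ) + 2) := by
    simp only [hg₁]
    rw [intervalIntegral.integral_add (((continuous_pow _).intervalIntegrable 0 t).add
        (intervalIntegrable_const)) (hc3.intervalIntegrable 0 t),
      intervalIntegral.integral_add ((continuous_pow _).intervalIntegrable 0 t)
        intervalIntegrable_const]
    rw [intervalIntegral.integral_const]
    have hsub : (∫ x in (0 : ℝ)..t, (t - x) ^ (j + 1))
        = ∫ x in (t - t)..(t - 0), x ^ (j + 1) :=
      intervalIntegral.integral_comp_sub_left (fun x => x ^ (j + 1)) t
    rw [hsub, hpow, hpow]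
    simp
    ring
  have hJ2 : ∫ x in t..l, g₂ x
      = (l ^ (j + 2) - t ^ (j + 2)) / ((j : ℝ) + 2) + ((N : ℝ) - 2) * l ^ (j + 1) * (l - t)
        + (l ^ (j + 2) - t ^ (j + 2)) / ((j : ℝ) + 2) := by
    simp only [hg₂]
    rw [intervalIntegral.integral_add (((continuous_pow _).intervalIntegrable t l).add
        (intervalIntegrable_const)) (hc4.intervalIntegrable t l),
      intervalIntegral.integral_add ((continuous_pow _).intervalIntegrable t l)
        intervalIntegrable_const]
    rw [intervalIntegral.integral_const]
    have hsub : (∫ x in t..l, (t + l - x) ^ (j + 1))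
        = ∫ x in (t + l - l)..(t + l - t), x ^ (j + 1) :=
      intervalIntegral.integral_comp_sub_left (fun x => x ^ (j + 1)) (t + l)
    rw [hsub, hpow, hpow]
    simp
    ring
  rw [show (∫ x in (0 : ℝ)..l,
          (x ^ (j + 1) + ((⌈(1 - x) / l⌉ : ℝ) - 1) * l ^ (j + 1) +
            (1 - x - ((⌈(1 - x) / l⌉ : ℝ) - 1) * l) ^ (j + 1)))
      = ∫ x in (0 : ℝ)..l, f x from rfl]
  rw [hsplit, hI1, hI2, hJ1, hJ2]
  -- final algebra
  have hl : l ≠ 0 := ne_of_gt hl0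
  have hj2 : ((j : ℝ) + 2) ≠ 0 := by positivity
  have hks : (j + 1) - 1 = j := rfl
  rw [hks]
  have hT : t = 1 - ((N : ℝ) - 1) * l := ht
  rw [hT]
  push_cast
  have hlp : l ^ (j + 1) = l ^ j * l := pow_succ l j
  have hlp2 : l ^ (j + 2) = l ^ j * l * l := by ring
  field_simp
  ring
end

section
/- Second-moment formula for linear-quadratic functionals of i.i.d. noise (Lemma A.2, generic form): Let n ≥ 1 and let ε_0, …, ε_n be i.i.d. real random variables with E[ε_0] = 0 and E[ε_0^4] < ∞; write ν_m = E[ε_0^m]. Let θ_P, φ_P, ψ_P, θ_Q, φ_Q, ψ_Q ∈ ℝ^{n+1} (indexed 0, …, n) satisfy ψ_P(n) = ψ_Q(n) = 0, Σ_{j=0}^{n} φ_P(j) = 0 and Σ_{j=0}^{n} φ_Q(j) = 0. Define P = Σ_{j=0}^{n} ( θ_P(j) ε_j + φ_P(j) ε_j^2 + ψ_P(j) ε_j ε_{j+1} ) and Q analogously with the Q-coefficients. Then E[P·Q] = ν_2 ⟨θ_P, θ_Q⟩ + ν_4 ⟨φ_P, φ_Q⟩ + ν_2^2 ( ⟨ψ_P,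 ψ_Q⟩ − ⟨φ_P, φ_Q⟩ ) + ν_3 ( ⟨θ_P, φ_Q⟩ + ⟨φ_P, θ_Q⟩ ), where ⟨·,·⟩ denotes the Euclidean inner product on ℝ^{n+1}. -/
open MeasureTheory ProbabilityTheory Filter

section AuxSMLQ
variable {Ω : Type*} [MeasurableSpace Ω] {μ : Measure Ω}

/-- Auxiliary predicate: `f` is integrable with integral `a`. -/
def IntEqSMLQ (μ : Measure Ω) (f : Ω → ℝ) (a : ℝ) : Prop :=
  Integrable f μ ∧ ∫ ω, f ω ∂μ = a

lemma IntEqSMLQ.add {f g : Ω → ℝ} {a b : ℝ} (hf : IntEqSMLQ μ f a) (hg : IntEqSMLQ μ g b) :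
    IntEqSMLQ μ (fun ω => f ω + g ω) (a + b) :=
  ⟨hf.1.add hg.1, by rw [integral_add hf.1 hg.1, hf.2, hg.2]⟩

lemma IntEqSMLQ.const_mul {f : Ω → ℝ} {a : ℝ} (c : ℝ) (hf : IntEqSMLQ μ f a) :
    IntEqSMLQ μ (fun ω => c * f ω) (c * a) :=
  ⟨hf.1.const_mul c, by rw [integral_const_mul, hf.2]⟩

lemma IntEqSMLQ.congr {f g : Ω → ℝ} {a b : ℝ} (hf : IntEqSMLQ μ f a)
    (hfg : ∀ ω, g ω = f ω) (hab : b = a) : IntEqSMLQ μ g b := by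
  subst hab; rwa [show g = f from funext hfg]

lemma IntEqSMLQ.mul_indep {f g : Ω → ℝ} {a b : ℝ} (hind : IndepFun f g μ)
    (hf : IntEqSMLQ μ f a) (hg : IntEqSMLQ μ g b) :
    IntEqSMLQ μ (fun ω => f ω * g ω) (a * b) :=
  ⟨hind.integrable_mul hf.1 hg.1, by
    rw [← hf.2, ← hg.2]; exact IndepFun.integral_mul_eq_mul_integral hind hf.1.1 hg.1.1⟩

lemma IntEqSMLQ.zero : IntEqSMLQ μ (fun _ => (0 : ℝ)) 0 :=
  ⟨integrable_zero _ _ _, by simp⟩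

end AuxSMLQ

/-- **Lemma A.2, generic form.** Second-moment formula for
linear-quadratic functionals of i.i.d. noise: for
`P = Σ_{j=0}^{n} (θ_P(j) ε_j + φ_P(j) ε_j² + ψ_P(j) ε_j ε_{j+1})` and `Q`
analogously, with `ψ_P(n) = ψ_Q(n) = 0` and the `φ` coefficients summing to
zero,
`E[P·Q] = ν₂⟨θ_P,θ_Q⟩ + ν₄⟨φ_P,φ_Q⟩ + ν₂²(⟨ψ_P,ψ_Q⟩ − ⟨φ_P,φ_Q⟩)
+ ν₃(⟨θ_P,φ_Q⟩ + ⟨φ_P,θ_Q⟩)`. -/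
theorem second_moment_linear_quadratic_noise_functionals
    {Ω : Type*} [MeasurableSpace Ω] (μ : Measure Ω) [IsProbabilityMeasure μ]
    (n : ℕ) (hn : 1 ≤ n) (ε : ℕ → Ω → ℝ)
    (hmeas : ∀ j, j ≤ n → Measurable (ε j))
    (hindep : iIndepFun
      (fun j : Fin (n + 1) => ε (j : ℕ)) μ)
    (hident : ∀ j : Fin (n + 1), IdentDistrib (ε (j : ℕ)) (ε 0) μ μ)
    (hmean : ∫ ω, ε 0 ω ∂μ = 0)
    (hmom4 : Integrable (fun ω => (ε 0 ω) ^ 4) μ)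
    (θP φP ψP θQ φQ ψQ : ℕ → ℝ)
    (hψP : ψP n = 0) (hψQ : ψQ n = 0)
    (hφP : ∑ j ∈ Finset.range (n + 1), φP j = 0)
    (hφQ : ∑ j ∈ Finset.range (n + 1), φQ j = 0) :
    ∫ ω,
        (∑ j ∈ Finset.range (n + 1),
          (θP j * ε j ω + φP j * (ε j ω) ^ 2 + ψP j * (ε j ω * ε (j + 1) ω))) *
          (∑ j ∈ Finset.range (n + 1),
            (θQ j * ε j ω + φQ j * (ε j ω) ^ 2 + ψQ j * (ε j ω * ε (j + 1) ω))) ∂μ =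
      (∫ ω, (ε 0 ω) ^ 2 ∂μ) * (∑ j ∈ Finset.range (n + 1), θP j * θQ j) +
        (∫ ω, (ε 0 ω) ^ 4 ∂μ) * (∑ j ∈ Finset.range (n + 1), φP j * φQ j) +
        (∫ ω, (ε 0 ω) ^ 2 ∂μ) ^ 2 *
          ((∑ j ∈ Finset.range (n + 1), ψP j * ψQ j) -
            ∑ j ∈ Finset.range (n + 1), φP j * φQ j) +
        (∫ ω, (ε 0 ω) ^ 3 ∂μ) *
          ((∑ j ∈ Finset.range (n + 1), θP j * φQ j) +
            ∑ j ∈ Finset.range (n + 1), φP j * θQ j) := by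
  classical
  have hm : ∀ i : Fin (n + 1), Measurable (ε (i : ℕ)) :=
    fun i => hmeas i (Nat.lt_succ_iff.mp i.isLt)
  have hmeas0 : Measurable (ε 0) := hmeas 0 (Nat.zero_le n)
  -- the moments
  set ν : ℕ → ℝ := fun a => ∫ ω, ε 0 ω ^ a ∂μ with hνdef
  have hν : ∀ a, (∫ ω, ε 0 ω ^ a ∂μ) = ν a := fun a => rfl
  have hν1 : ν 1 = 0 := by rw [hνdef]; simpa using hmean
  -- integrability of moments of ε 0
  have hint0 : ∀ a, a ≤ 4 → Integrable (fun ω => ε 0 ω ^ a) μ := by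
    intro a ha
    have hb : ∀ x : ℝ, |x ^ a| ≤ 1 + x ^ 4 := by
      intro x
      rw [abs_pow]
      rcases le_total |x| 1 with h | h
      · have h1 : |x| ^ a ≤ 1 := pow_le_one₀ (abs_nonneg x) h
        have h2 : (0:ℝ) ≤ x ^ 4 := by positivity
        linarith
      · have h1 : |x| ^ a ≤ |x| ^ 4 := pow_le_pow_right₀ h ha
        have h2 : |x| ^ 4 = x ^ 4 := by
          rw [← abs_pow]; exact abs_of_nonneg (by positivity)
        linarith
    refine Integrable.mono' ((integrable_const 1).add hmom4)
      ((hmeas0.pow_const a).aestronglyMeasurable) (ae_of_all _ fun ω => ?_)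
    simpa using hb (ε 0 ω)
  -- single moments
  have base : ∀ i, i ≤ n → ∀ a, a ≤ 4 → IntEqSMLQ μ (fun ω => ε i ω ^ a) (ν a) := by
    intro i hi a ha
    have hid : IdentDistrib (fun ω => ε i ω ^ a) (fun ω => ε 0 ω ^ a) μ μ :=
      (hident ⟨i, by omega⟩).comp (measurable_id.pow_const a)
    exact ⟨hid.integrable_iff.mpr (hint0 a ha), hid.integral_eq.trans (hν a)⟩
  -- pairs
  have pair : ∀ i j, i ≤ n → j ≤ n → i ≠ j → ∀ a b, a ≤ 4 → b ≤ 4 →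
      IntEqSMLQ μ (fun ω => ε i ω ^ a * ε j ω ^ b) (ν a * ν b) := by
    intro i j hi hj hij a b ha hb
    have hind : IndepFun (fun ω => ε i ω ^ a) (fun ω => ε j ω ^ b) μ := by
      have h0 : IndepFun (ε i) (ε j) μ :=
        hindep.indepFun (i := ⟨i, by omega⟩) (j := ⟨j, by omega⟩)
          (Fin.ne_of_val_ne hij)
      exact h0.comp (measurable_id.pow_const a) (measurable_id.pow_const b)
    exact IntEqSMLQ.mul_indep hind (base i hi a ha) (base j hj b hb)
  -- triples
  have triple : ∀ i j k, i ≤ n → j ≤ n → k ≤ n → i ≠ j → i ≠ k → j ≠ k →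
      ∀ a b c, a ≤ 4 → b ≤ 4 → c ≤ 4 →
      IntEqSMLQ μ (fun ω => ε i ω ^ a * (ε j ω ^ b * ε k ω ^ c))
        (ν a * (ν b * ν c)) := by
    intro i j k hi hj hk hij hik hjk a b c ha hb hc
    have hind : IndepFun (fun ω => ε i ω ^ a)
        (fun ω => ε j ω ^ b * ε k ω ^ c) μ := by
      have h0 : IndepFun (fun ω => (ε j ω, ε k ω)) (ε i) μ :=
        hindep.indepFun_prodMk hm ⟨j, by omega⟩ ⟨k, by omega⟩ ⟨i, by omega⟩
          (Fin.ne_of_val_ne (Ne.symm hij)) (Fin.ne_of_val_ne (Ne.symm hik))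
      exact h0.symm.comp (measurable_id.pow_const a)
        ((measurable_fst.pow_const b).mul (measurable_snd.pow_const c))
    exact IntEqSMLQ.mul_indep hind (base i hi a ha)
      (pair j k hj hk hjk b c hb hc)
  -- quadruples (exponent one each)
  have quad : ∀ i j k l, i ≤ n → j ≤ n → k ≤ n → l ≤ n →
      i ≠ j → k ≠ l → i ≠ k → i ≠ l → j ≠ k → j ≠ l →
      IntEqSMLQ μ (fun ω => (ε i ω ^ 1 * ε j ω ^ 1) * (ε k ω ^ 1 * ε l ω ^ 1))
        ((ν 1 * ν 1) * (ν 1 * ν 1)) := by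
    intro i j k l hi hj hk hl hij hkl hik hil hjk hjl
    have hind : IndepFun (fun ω => ε i ω ^ 1 * ε j ω ^ 1)
        (fun ω => ε k ω ^ 1 * ε l ω ^ 1) μ := by
      have h0 : IndepFun (fun ω => (ε i ω, ε j ω)) (fun ω => (ε k ω, ε l ω)) μ :=
        hindep.indepFun_prodMk_prodMk hm ⟨i, by omega⟩ ⟨j, by omega⟩
          ⟨k, by omega⟩ ⟨l, by omega⟩
          (Fin.ne_of_val_ne hik) (Fin.ne_of_val_ne hil)
          (Fin.ne_of_val_ne hjk) (Fin.ne_of_val_ne hjl)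
      exact h0.comp ((measurable_fst.pow_const 1).mul (measurable_snd.pow_const 1))
        ((measurable_fst.pow_const 1).mul (measurable_snd.pow_const 1))
    exact IntEqSMLQ.mul_indep hind
      (pair i j hi hj hij 1 1 (by norm_num) (by norm_num))
      (pair k l hk hl hkl 1 1 (by norm_num) (by norm_num))
  -- the key per-pair computation
  have key : ∀ j k, j ≤ n → k ≤ n →
      IntEqSMLQ μ
        (fun ω => (θP j * ε j ω + φP j * (ε j ω) ^ 2 + ψP j * (ε j ω * ε (j + 1) ω)) *
          (θQ k * ε k ω + φQ k * (ε k ω) ^ 2 + ψQ k * (ε k ω * ε (k + 1) ω)))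
        (ν 2 ^ 2 * (φP j * φQ k) +
          (if j = k then
            ν 2 * (θP j * θQ j) + ν 3 * (θP j * φQ j + φP j * θQ j) +
              (ν 4 - ν 2 ^ 2) * (φP j * φQ j) + ν 2 ^ 2 * (ψP j * ψQ j)
          else 0)) := by
    intro j k hj hk
    rcases eq_or_ne j k with rfl | hjk
    · by_cases hjn : j = n
      · subst hjn
        have H := ((((((((((base j (by omega) 2 (by norm_num)).const_mul (θP j * θQ j)).add ((base j (by omega) 3 (by norm_num)).const_mul (θP j * φQ j))).add (IntEqSMLQ.zero (μ := μ))).add ((base j (by omega) 3 (by norm_num)).const_mul (φP j * θQ j))).add ((base j (by omega) 4 (by norm_num)).const_mul (φP j * φQ j))).add (IntEqSMLQ.zero (μ := μ))).add (IntEqSMLQ.zero (μ := μ))).add (IntEqSMLQ.zero (μ := μ))).add (IntEqSMLQ.zero (μ := μ)))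
        exact H.congr (fun ω => by simp only [hψP, hψQ]; ring) (by rw [if_pos rfl]; simp only [hψP, hψQ]; ring)
      · -- diagonal, j < n
        have H := ((((((((((base j (by omega) 2 (by norm_num)).const_mul (θP j * θQ j)).add ((base j (by omega) 3 (by norm_num)).const_mul (θP j * φQ j))).add ((pair j (j+1) (by omega) (by omega) (by omega) 2 1 (by norm_num) (by norm_num)).const_mul (θP j * ψQ j))).add ((base j (by omega) 3 (by norm_num)).const_mul (φP j * θQ j))).add ((base j (by omega) 4 (by norm_num)).const_mul (φP j * φQ j))).add ((pair j (j+1) (by omega) (by omega) (by omega) 3 1 (by norm_num) (by norm_num)).const_mul (φP j * ψQ j))).add ((pair j (j+1) (by omega) (by omega) (by omega) 2 1 (by norm_num) (by norm_num)).const_mul (ψP j * θQ j))).add ((pair j (j+1) (by omega) (by omega) (by omega) 3 1 (by norm_num) (by norm_num)).const_mul (ψP j * φQ j))).add ((pair j (j+1) (by omega) (by omega) (by omega) 2 2 (by norm_num) (by norm_num)).const_mul (ψP j * ψQ j)))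
        exact H.congr (fun ω => by ring) (by rw [if_pos rfl]; simp only [hν1]; ring)
    · by_cases hjn : j = n
      · subst hjn
        by_cases h1 : j = k + 1
        · subst h1
          have H := ((((((((((pair k (k+1) (by omega) (by omega) (by omega) 1 1 (by norm_num) (by norm_num)).const_mul (θP (k+1) * θQ k)).add ((pair k (k+1) (by omega) (by omega) (by omega) 2 1 (by norm_num) (by norm_num)).const_mul (θP (k+1) * φQ k))).add ((pair k (k+1) (by omega) (by omega) (by omega) 1 2 (by norm_num) (by norm_num)).const_mul (θP (k+1) * ψQ k))).add ((pair k (k+1) (by omega) (by omega) (by omega) 1 2 (by norm_num) (by norm_num)).const_mul (φP (k+1) * θQ k))).add ((pair k (k+1) (by omega) (by omega) (by omega) 2 2 (by norm_num) (by norm_num)).const_mul (φP (k+1) * φQ k))).add ((pair k (k+1) (by omega) (by omega) (by omega) 1 3 (by norm_num) (by norm_num)).const_mul (φP (k+1) * ψQ k))).add (IntEqSMLQ.zero (μ := μ))).add (IntEqSMLQ.zero (μ := μ))).add (IntEqSMLQ.zero (μ := μ)))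
          exact H.congr (fun ω => by simp only [hψP]; ring) (by rw [if_neg (by omega)]; simp only [hψP, hν1]; ring)
        · -- j = old n, j ≠ k+1
          have H := ((((((((((pair k j (by omega) (by omega) (by omega) 1 1 (by norm_num) (by norm_num)).const_mul (θP j * θQ k)).add ((pair k j (by omega) (by omega) (by omega) 2 1 (by norm_num) (by norm_num)).const_mul (θP j * φQ k))).add ((triple k (k+1) j (by omega) (by omega) (by omega) (by omega) (by omega) (by omega) 1 1 1 (by norm_num) (by norm_num) (by norm_num)).const_mul (θP j * ψQ k))).add ((pair k j (by omega) (by omega) (by omega) 1 2 (by norm_num) (by norm_num)).const_mul (φP j * θQ k))).add ((pair k j (by omega) (by omega) (by omega) 2 2 (by norm_num) (by norm_num)).const_mul (φP j * φQ k))).add ((triple k (k+1) j (by omega) (by omega) (by omega) (by omega) (by omega) (by omega) 1 1 2 (by norm_num) (by norm_num) (by norm_num)).const_mul (φP j * ψQ k))).add (IntEqSMLQ.zero (μ := μ))).add (IntEqSMLQ.zero (μ := μ))).add (IntEqSMLQ.zero (μ := μ)))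
          exact H.congr (fun ω => by simp only [hψP]; ring) (by rw [if_neg (by omega)]; simp only [hψP, hν1]; ring)
      · by_cases hkn : k = n
        · subst hkn
          by_cases h2 : k = j + 1
          · subst h2
            have H := ((((((((((pair j (j+1) (by omega) (by omega) (by omega) 1 1 (by norm_num) (by norm_num)).const_mul (θP j * θQ (j+1))).add ((pair j (j+1) (by omega) (by omega) (by omega) 1 2 (by norm_num) (by norm_num)).const_mul (θP j * φQ (j+1)))).add (IntEqSMLQ.zero (μ := μ))).add ((pair j (j+1) (by omega) (by omega) (by omega) 2 1 (by norm_num) (by norm_num)).const_mul (φP j * θQ (j+1)))).add ((pair j (j+1) (by omega) (by omega) (by omega) 2 2 (by norm_num) (by norm_num)).const_mul (φP j * φQ (j+1)))).add (IntEqSMLQ.zero (μ := μ))).add ((pair j (j+1) (by omega) (by omega) (by omega) 1 2 (by norm_num) (by norm_num)).const_mul (ψP j * θQ (j+1)))).add ((pair j (j+1) (by omega) (by omega) (by omega) 1 3 (by norm_num) (by norm_num)).const_mul (ψP j * φQ (j+1)))).add (IntEqSMLQ.zero (μ := μ)))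
            exact H.congr (fun ω => by simp only [hψQ]; ring) (by rw [if_neg (by omega)]; simp only [hψQ, hν1]; ring)
          · -- k = old n, k ≠ j+1
            have H := ((((((((((pair j k (by omega) (by omega) (by omega) 1 1 (by norm_num) (by norm_num)).const_mul (θP j * θQ k)).add ((pair j k (by omega) (by omega) (by omega) 1 2 (by norm_num) (by norm_num)).const_mul (θP j * φQ k))).add (IntEqSMLQ.zero (μ := μ))).add ((pair j k (by omega) (by omega) (by omega) 2 1 (by norm_num) (by norm_num)).const_mul (φP j * θQ k))).add ((pair j k (by omega) (by omega) (by omega) 2 2 (by norm_num) (by norm_num)).const_mul (φP j * φQ k))).add (IntEqSMLQ.zero (μ := μ))).add ((triple j (j+1) k (by omega) (by omega) (by omega) (by omega) (by omega) (by omega) 1 1 1 (by norm_num) (by norm_num) (by norm_num)).const_mul (ψP j * θQ k))).add ((triple j (j+1) k (by omega) (by omega) (by omega) (by omega) (by omega) (by omega) 1 1 2 (by norm_num) (by norm_num) (by norm_num)).const_mul (ψP j * φQ k))).add (IntEqSMLQ.zero (μ := μ)))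
            exact H.congr (fun ω => by simp only [hψQ]; ring) (by rw [if_neg (by omega)]; simp only [hψQ, hν1]; ring)
        · by_cases h1 : j = k + 1
          · subst h1
            have H := ((((((((((pair k (k+1) (by omega) (by omega) (by omega) 1 1 (by norm_num) (by norm_num)).const_mul (θP (k+1) * θQ k)).add ((pair k (k+1) (by omega) (by omega) (by omega) 2 1 (by norm_num) (by norm_num)).const_mul (θP (k+1) * φQ k))).add ((pair k (k+1) (by omega) (by omega) (by omega) 1 2 (by norm_num) (by norm_num)).const_mul (θP (k+1) * ψQ k))).add ((pair k (k+1) (by omega) (by omega) (by omega) 1 2 (by norm_num) (by norm_num)).const_mul (φP (k+1) * θQ k))).add ((pair k (k+1) (by omega) (by omega) (by omega) 2 2 (by norm_num) (by norm_num)).const_mul (φP (k+1) * φQ k))).add ((pair k (k+1) (by omega) (by omega) (by omega) 1 3 (by norm_num) (by norm_num)).const_mul (φP (k+1) * ψQ k))).add ((triple k (k+1) (k+2) (by omega) (by omega) (by omega) (by omega) (by omega) (by omega) 1 1 1 (by norm_num) (by norm_num) (by norm_num)).const_mul (ψP (k+1) * θQ k))).add ((triple k (k+1) (k+2) (by omega)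 (by omega) (by omega) (by omega) (by omega) (by omega) 2 1 1 (by norm_num) (by norm_num) (by norm_num)).const_mul (ψP (k+1) * φQ k))).add ((triple k (k+1) (k+2) (by omega) (by omega) (by omega) (by omega) (by omega) (by omega) 1 2 1 (by norm_num) (by norm_num) (by norm_num)).const_mul (ψP (k+1) * ψQ k)))
            exact H.congr (fun ω => by ring) (by rw [if_neg (by omega)]; simp only [hν1]; ring)
          · by_cases h2 : k = j + 1
            · subst h2
              have H := ((((((((((pair j (j+1) (by omega) (by omega) (by omega) 1 1 (by norm_num) (by norm_num)).const_mul (θP j * θQ (j+1))).add ((pair j (j+1) (by omega) (by omega) (by omega) 1 2 (by norm_num) (by norm_num)).const_mul (θP j * φQ (j+1)))).add ((triple j (j+1) (j+2) (by omega) (by omega) (by omega) (by omega) (by omega) (by omega) 1 1 1 (by norm_num) (by norm_num) (by norm_num)).const_mul (θP j * ψQ (j+1)))).add ((pair j (j+1) (by omega) (by omega) (by omega) 2 1 (by norm_num) (by norm_num)).const_mul (φP j * θQ (j+1)))).add ((pair j (j+1) (by omega) (by omega) (by omega) 2 2 (by norm_num) (by norm_num)).const_mul (φP j * φQ (j+1)))).add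 ((triple j (j+1) (j+2) (by omega) (by omega) (by omega) (by omega) (by omega) (by omega) 2 1 1 (by norm_num) (by norm_num) (by norm_num)).const_mul (φP j * ψQ (j+1)))).add ((pair j (j+1) (by omega) (by omega) (by omega) 1 2 (by norm_num) (by norm_num)).const_mul (ψP j * θQ (j+1)))).add ((pair j (j+1) (by omega) (by omega) (by omega) 1 3 (by norm_num) (by norm_num)).const_mul (ψP j * φQ (j+1)))).add ((triple j (j+1) (j+2) (by omega) (by omega) (by omega) (by omega) (by omega) (by omega) 1 2 1 (by norm_num) (by norm_num) (by norm_num)).const_mul (ψP j * ψQ (j+1))))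
              exact H.congr (fun ω => by ring) (by rw [if_neg (by omega)]; simp only [hν1]; ring)
            · -- generic off-diagonal
              have H := ((((((((((pair j k (by omega) (by omega) (by omega) 1 1 (by norm_num) (by norm_num)).const_mul (θP j * θQ k)).add ((pair j k (by omega) (by omega) (by omega) 1 2 (by norm_num) (by norm_num)).const_mul (θP j * φQ k))).add ((triple j k (k+1) (by omega) (by omega) (by omega) (by omega) (by omega) (by omega) 1 1 1 (by norm_num) (by norm_num) (by norm_num)).const_mul (θP j * ψQ k))).add ((pair j k (by omega) (by omega) (by omega) 2 1 (by norm_num) (by norm_num)).const_mul (φP j * θQ k))).add ((pair j k (by omega) (by omega) (by omega) 2 2 (by norm_num) (by norm_num)).const_mul (φP j * φQ k))).add ((triple j k (k+1) (by omega) (by omega) (by omega) (by omega) (by omega) (by omega) 2 1 1 (by norm_num) (by norm_num) (by norm_num)).const_mul (φP j * ψQ k))).add ((triple j (j+1) k (by omega) (by omega) (by omega) (by omega) (by omega) (by omega) 1 1 1 (by norm_num) (by norm_num) (by norm_num)).const_mul (ψP j * θQ k))).add ((triple j (j+1) k (by omega) (by omega) (by omega) (by omega) (by omega) (by omega) 1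 1 2 (by norm_num) (by norm_num) (by norm_num)).const_mul (ψP j * φQ k))).add ((quad j (j+1) k (k+1) (by omega) (by omega) (by omega) (by omega) (by omega) (by omega) (by omega) (by omega) (by omega) (by omega)).const_mul (ψP j * ψQ k)))
              exact H.congr (fun ω => by ring) (by rw [if_neg hjk]; simp only [hν1]; ring)
  -- assembling
  have step1 : (∫ ω,
        (∑ j ∈ Finset.range (n + 1),
          (θP j * ε j ω + φP j * (ε j ω) ^ 2 + ψP j * (ε j ω * ε (j + 1) ω))) *
          (∑ j ∈ Finset.range (n + 1),
            (θQ j * ε j ω + φQ j * (ε j ω) ^ 2 + ψQ j * (ε j ω * ε (j + 1) ω))) ∂μ) =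
      ∑ j ∈ Finset.range (n + 1), ∑ k ∈ Finset.range (n + 1),
        (ν 2 ^ 2 * (φP j * φQ k) +
          (if j = k then
            ν 2 * (θP j * θQ j) + ν 3 * (θP j * φQ j + φP j * θQ j) +
              (ν 4 - ν 2 ^ 2) * (φP j * φQ j) + ν 2 ^ 2 * (ψP j * ψQ j)
          else 0)) := by
    have hintF : ∀ j ∈ Finset.range (n + 1), ∀ k ∈ Finset.range (n + 1),
        Integrable (fun ω =>
          (θP j * ε j ω + φP j * (ε j ω) ^ 2 + ψP j * (ε j ω * ε (j + 1) ω)) *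
          (θQ k * ε k ω + φQ k * (ε k ω) ^ 2 + ψQ k * (ε k ω * ε (k + 1) ω))) μ :=
      fun j hj k hk =>
        (key j k (Nat.lt_succ_iff.mp (Finset.mem_range.mp hj))
          (Nat.lt_succ_iff.mp (Finset.mem_range.mp hk))).1
    calc
      _ = ∫ ω, ∑ j ∈ Finset.range (n + 1), ∑ k ∈ Finset.range (n + 1),
            ((θP j * ε j ω + φP j * (ε j ω) ^ 2 + ψP j * (ε j ω * ε (j + 1) ω)) *
            (θQ k * ε k ω + φQ k * (ε k ω) ^ 2 + ψQ k * (ε k ω * ε (k + 1) ω))) ∂μ := by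
        congr 1; funext ω; exact Finset.sum_mul_sum _ _ _ _
      _ = ∑ j ∈ Finset.range (n + 1), ∫ ω, ∑ k ∈ Finset.range (n + 1),
            ((θP j * ε j ω + φP j * (ε j ω) ^ 2 + ψP j * (ε j ω * ε (j + 1) ω)) *
            (θQ k * ε k ω + φQ k * (ε k ω) ^ 2 + ψQ k * (ε k ω * ε (k + 1) ω))) ∂μ :=
        integral_finset_sum _ (fun j hj =>
          integrable_finset_sum _ (fun k hk => hintF j hj k hk))
      _ = ∑ j ∈ Finset.range (n + 1), ∑ k ∈ Finset.range (n + 1), ∫ ω,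
            ((θP j * ε j ω + φP j * (ε j ω) ^ 2 + ψP j * (ε j ω * ε (j + 1) ω)) *
            (θQ k * ε k ω + φQ k * (ε k ω) ^ 2 + ψQ k * (ε k ω * ε (k + 1) ω))) ∂μ :=
        Finset.sum_congr rfl fun j hj =>
          integral_finset_sum _ (fun k hk => hintF j hj k hk)
      _ = _ :=
        Finset.sum_congr rfl fun j hj => Finset.sum_congr rfl fun k hk =>
          (key j k (Nat.lt_succ_iff.mp (Finset.mem_range.mp hj))
            (Nat.lt_succ_iff.mp (Finset.mem_range.mp hk))).2
  rw [step1, hν 2, hν 3, hν 4]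
  -- now pure algebra
  have hdiag : ∀ j ∈ Finset.range (n + 1),
      (∑ k ∈ Finset.range (n + 1),
        (ν 2 ^ 2 * (φP j * φQ k) +
          (if j = k then
            ν 2 * (θP j * θQ j) + ν 3 * (θP j * φQ j + φP j * θQ j) +
              (ν 4 - ν 2 ^ 2) * (φP j * φQ j) + ν 2 ^ 2 * (ψP j * ψQ j)
          else 0))) =
      ν 2 * (θP j * θQ j) + ν 3 * (θP j * φQ j + φP j * θQ j) +
        (ν 4 - ν 2 ^ 2) * (φP j * φQ j) + ν 2 ^ 2 * (ψP j * ψQ j) := by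
    intro j hj
    rw [Finset.sum_add_distrib, Finset.sum_ite_eq, if_pos hj]
    have : (∑ k ∈ Finset.range (n + 1), ν 2 ^ 2 * (φP j * φQ k)) = 0 := by
      rw [← Finset.mul_sum, ← Finset.mul_sum, hφQ, mul_zero, mul_zero]
    rw [this, zero_add]
  rw [Finset.sum_congr rfl hdiag]
  simp only [mul_add, sub_mul, mul_sub, mul_assoc]
  simp only [Finset.sum_add_distrib, Finset.sum_sub_distrib, ← Finset.mul_sum]
  ring
end

section
/- Vanishing of mixed third-order noise moments under support separation (Lemma A.3, first part, generic form): Let n ≥ 1 and let ε_0, …, ε_n be i.i.d. real random variables with E[ε_0] = 0 and E[ε_0^4] < ∞. Let θ_A, θ_C, θ_B, φ_B, ψ_B ∈ ℝ^{n+1} (indexed 0, …, n) with ψ_B(n) = 0 and Σ_{j=0}^{n} φ_B(j) = 0, and assume the support separation condition: for every index j with θ_A(j) ≠ 0 one has θ_B(j) = 0, φ_B(j) = 0, ψ_B(j) = 0, and (if j ≥ 1) ψ_B(j−1) = 0. Define A = Σ_j θ_A(j) ε_j, C = Σ_j θ_C(j) ε_j, and B = Σ_j ( θ_B(j) ε_j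 + φ_B(j) ε_j^2 + ψ_B(j) ε_j ε_{j+1} ). Then E[A·B·C] = 0. -/
open MeasureTheory ProbabilityTheory Filter

/-- AM-GM type bound: `|w x y z| ≤ (w⁴ + x⁴ + y⁴ + z⁴)/4`. -/
lemma abs_mul_four_le (w x y z : ℝ) : |w * x * y * z| ≤ (w^4 + x^4 + y^4 + z^4)/4 := by
  have h1 : |w * x| ≤ (w^2 + x^2)/2 := by
    rw [abs_mul]
    nlinarith [sq_nonneg (|w| - |x|), sq_abs w, sq_abs x, abs_nonneg w, abs_nonneg x]
  have h2 : |y * z| ≤ (y^2 + z^2)/2 := by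
    rw [abs_mul]
    nlinarith [sq_nonneg (|y| - |z|), sq_abs y, sq_abs z, abs_nonneg y, abs_nonneg z]
  have h3 : |w * x * y * z| = |w * x| * |y * z| := by
    rw [← abs_mul]; ring_nf
  rw [h3]
  nlinarith [abs_nonneg (w*x), abs_nonneg (y*z), sq_nonneg (w^2 - x^2), sq_nonneg (y^2 - z^2),
    sq_nonneg (w^2 + x^2 - (y^2 + z^2)),
    mul_le_mul h1 h2 (abs_nonneg _) (by positivity : (0:ℝ) ≤ (w^2 + x^2)/2)]

/-- **Lemma A.3, first part, generic form.** Vanishing of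
mixed third-order noise moments under support separation: with
`A = Σ_j θ_A(j) ε_j`, `C = Σ_j θ_C(j) ε_j` and
`B = Σ_j (θ_B(j) ε_j + φ_B(j) ε_j² + ψ_B(j) ε_j ε_{j+1})`, where
`ψ_B(n) = 0`, `Σ_j φ_B(j) = 0`, and the support of `θ_A` is separated from
the supports of `θ_B, φ_B, ψ_B` and of `ψ_B` shifted by one, one has
`E[A·B·C] = 0`. -/
theorem mixed_third_order_noise_moment_vanishes
    {Ω : Type*} [MeasurableSpace Ω] (μ : Measure Ω) [IsProbabilityMeasure μ]
    (n : ℕ) (hn : 1 ≤ n) (ε : ℕ → Ω → ℝ)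
    (hmeas : ∀ j, j ≤ n → Measurable (ε j))
    (hindep : iIndepFun
      (fun j : Fin (n + 1) => ε (j : ℕ)) μ)
    (hident : ∀ j : Fin (n + 1), IdentDistrib (ε (j : ℕ)) (ε 0) μ μ)
    (hmean : ∫ ω, ε 0 ω ∂μ = 0)
    (hmom4 : Integrable (fun ω => (ε 0 ω) ^ 4) μ)
    (θA θC θB φB ψB : ℕ → ℝ)
    (hψB : ψB n = 0)
    (hφB : ∑ j ∈ Finset.range (n + 1), φB j = 0)
    (hsep : ∀ j ≤ n, θA j ≠ 0 →
      θB j = 0 ∧ φB j = 0 ∧ ψB j = 0 ∧ (1 ≤ j → ψB (j - 1) = 0)) :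
    ∫ ω,
        (∑ j ∈ Finset.range (n + 1), θA j * ε j ω) *
          (∑ j ∈ Finset.range (n + 1),
            (θB j * ε j ω + φB j * (ε j ω) ^ 2 + ψB j * (ε j ω * ε (j + 1) ω))) *
          (∑ j ∈ Finset.range (n + 1), θC j * ε j ω) ∂μ = 0 := by
  classical
  -- basic measurability
  have hm : ∀ j : Fin (n+1), Measurable (ε (j : ℕ)) :=
    fun j => hmeas j (Nat.lt_succ_iff.mp j.isLt)
  -- mean zero for each variable
  have hmean' : ∀ i, i ≤ n → ∫ ω, ε i ω ∂μ = 0 := fun i hi =>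
    ((hident ⟨i, Nat.lt_succ_of_le hi⟩).integral_eq).trans hmean
  -- fourth moments
  have h4int : ∀ i, i ≤ n → Integrable (fun ω => (ε i ω)^4) μ := fun i hi =>
    (((hident ⟨i, Nat.lt_succ_of_le hi⟩).comp (measurable_id.pow_const 4)).integrable_iff).mpr
      hmom4
  -- second moments are all equal
  have h2eq : ∀ i, i ≤ n → ∫ ω, (ε i ω)^2 ∂μ = ∫ ω, (ε 0 ω)^2 ∂μ := fun i hi =>
    ((hident ⟨i, Nat.lt_succ_of_le hi⟩).comp (measurable_id.pow_const 2)).integral_eq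
  -- integrability of quadruple products
  have intM4 : ∀ a, a ≤ n → ∀ b, b ≤ n → ∀ c, c ≤ n → ∀ d, d ≤ n →
      Integrable (fun ω => ε a ω * ε b ω * ε c ω * ε d ω) μ := by
    intro a ha b hb c hc d hd
    have hbI : Integrable (fun ω => ((ε a ω)^4 + (ε b ω)^4 + (ε c ω)^4 + (ε d ω)^4)/4) μ :=
      ((((h4int a ha).add (h4int b hb)).add (h4int c hc)).add (h4int d hd)).div_const 4
    refine hbI.mono'
      ((((hmeas a ha).mul (hmeas b hb)).mul (hmeas c hc)).mul (hmeas d hd)).aestronglyMeasurable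
      (Filter.Eventually.of_forall fun ω => ?_)
    rw [Real.norm_eq_abs]
    exact abs_mul_four_le _ _ _ _
  -- integrability of triple products
  have intM3 : ∀ a, a ≤ n → ∀ b, b ≤ n → ∀ c, c ≤ n →
      Integrable (fun ω => ε a ω * ε b ω * ε c ω) μ := by
    intro a ha b hb c hc
    have hbI : Integrable (fun ω => ((ε a ω)^4 + (ε b ω)^4 + (ε c ω)^4 + 1)/4) μ :=
      ((((h4int a ha).add (h4int b hb)).add (h4int c hc)).add (integrable_const 1)).div_const 4
    refine hbI.mono'
      (((hmeas a ha).mul (hmeas b hb)).mul (hmeas c hc)).aestronglyMeasurable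
      (Filter.Eventually.of_forall fun ω => ?_)
    rw [Real.norm_eq_abs]
    simpa using abs_mul_four_le (ε a ω) (ε b ω) (ε c ω) 1
  -- vanishing of integrals with a "lone" factor
  have izero : ∀ x, x ≤ n → ∀ y, y ≤ n → ∀ z, z ≤ n → ∀ i, i ≤ n →
      x ≠ i → y ≠ i → z ≠ i → ∀ (p q r : ℕ) (K : ℝ) (g : Ω → ℝ),
      (∀ ω, g ω = K * ((ε x ω)^p * ((ε y ω)^q * (ε z ω)^r) * ε i ω)) →
      ∫ ω, g ω ∂μ = 0 := by
    intro x hx y hy z hz i hi hxi hyi hzi p q r K g hg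
    set x' : Fin (n+1) := ⟨x, Nat.lt_succ_of_le hx⟩
    set y' : Fin (n+1) := ⟨y, Nat.lt_succ_of_le hy⟩
    set z' : Fin (n+1) := ⟨z, Nat.lt_succ_of_le hz⟩
    set i' : Fin (n+1) := ⟨i, Nat.lt_succ_of_le hi⟩
    have hx' : x' ≠ i' := Fin.ne_of_val_ne hxi
    have hy' : y' ≠ i' := Fin.ne_of_val_ne hyi
    have hz' : z' ≠ i' := Fin.ne_of_val_ne hzi
    have hInd : IndepFun (fun ω => (ε x ω)^p * ((ε y ω)^q * (ε z ω)^r))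
        (fun ω => ε i ω) μ := by
      have h := hindep.indepFun_finset {x', y', z'} {i'}
        (by simp only [Finset.disjoint_singleton_right, Finset.mem_insert, Finset.mem_singleton]
            rintro (h | h | h)
            · exact hx' h.symm
            · exact hy' h.symm
            · exact hz' h.symm) hm
      have hg1 : Measurable (fun v : (j : ({x', y', z'} : Finset (Fin (n+1)))) → ℝ =>
          (v ⟨x', by simp⟩)^p * ((v ⟨y', by simp⟩)^q * (v ⟨z', by simp⟩)^r)) := by fun_prop
      have hg2 : Measurable (fun v : (j : ({i'} : Finset (Fin (n+1)))) → ℝ =>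
          v ⟨i', by simp⟩) := by fun_prop
      exact h.comp hg1 hg2
    have hXm : Measurable (fun ω => (ε x ω)^p * ((ε y ω)^q * (ε z ω)^r)) :=
      ((hmeas x hx).pow_const p).mul (((hmeas y hy).pow_const q).mul ((hmeas z hz).pow_const r))
    have heq : ∫ ω, (ε x ω)^p * ((ε y ω)^q * (ε z ω)^r) * ε i ω ∂μ
        = (∫ ω, (ε x ω)^p * ((ε y ω)^q * (ε z ω)^r) ∂μ) * ∫ ω, ε i ω ∂μ :=
      hInd.integral_mul_eq_mul_integral hXm.aestronglyMeasurable (hmeas i hi).aestronglyMeasurable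
    simp only [hg]
    rw [integral_const_mul, heq, hmean' i hi, mul_zero, mul_zero]
  -- the square-square integrals
  have isq : ∀ x, x ≤ n → ∀ y, y ≤ n → x ≠ y → ∀ (K : ℝ) (g : Ω → ℝ),
      (∀ ω, g ω = K * ((ε x ω)^2 * (ε y ω)^2)) →
      ∫ ω, g ω ∂μ = K * (∫ ω, (ε 0 ω)^2 ∂μ)^2 := by
    intro x hx y hy hxy K g hg
    have hxy' : (⟨x, Nat.lt_succ_of_le hx⟩ : Fin (n+1)) ≠ ⟨y, Nat.lt_succ_of_le hy⟩ :=
      Fin.ne_of_val_ne hxy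
    have hInd : IndepFun (fun ω => (ε x ω)^2) (fun ω => (ε y ω)^2) μ :=
      (hindep.indepFun hxy').comp (measurable_id.pow_const 2) (measurable_id.pow_const 2)
    have heq : ∫ ω, (ε x ω)^2 * (ε y ω)^2 ∂μ
        = (∫ ω, (ε x ω)^2 ∂μ) * ∫ ω, (ε y ω)^2 ∂μ :=
      hInd.integral_mul_eq_mul_integral ((hmeas x hx).pow_const 2).aestronglyMeasurable
        ((hmeas y hy).pow_const 2).aestronglyMeasurable
    simp only [hg]
    rw [integral_const_mul, heq, h2eq x hx, h2eq y hy]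
    ring
  -- integrability of each individual term
  have hterm : ∀ a, a ≤ n → ∀ b, b ≤ n → ∀ c, c ≤ n →
      Integrable (fun ω => θA a * ε a ω *
        (θB b * ε b ω + φB b * ε b ω ^ 2 + ψB b * (ε b ω * ε (b + 1) ω)) *
        (θC c * ε c ω)) μ := by
    intro a ha b hb c hc
    have I1 : Integrable (fun ω => θA a * θB b * θC c * (ε a ω * ε b ω * ε c ω)) μ :=
      (intM3 a ha b hb c hc).const_mul _
    have I2 : Integrable (fun ω => θA a * φB b * θC c * (ε a ω * ε b ω * ε b ω * ε c ω)) μ :=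
      (intM4 a ha b hb b hb c hc).const_mul _
    have I3 : Integrable (fun ω => θA a * θC c * ψB b *
        (ε a ω * ε b ω * ε (b + 1) ω * ε c ω)) μ := by
      by_cases hψ : ψB b = 0
      · have h0 : (fun ω => θA a * θC c * ψB b * (ε a ω * ε b ω * ε (b + 1) ω * ε c ω))
            = fun _ => (0:ℝ) := funext fun ω => by rw [hψ]; ring
        rw [h0]; exact integrable_const 0
      · have hb1 : b + 1 ≤ n :=
          Nat.succ_le_of_lt (lt_of_le_of_ne hb fun h => hψ (h ▸ hψB))
        exact (intM4 a ha b hb (b+1) hb1 c hc).const_mul _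
    have hEq : (fun ω => θA a * ε a ω *
          (θB b * ε b ω + φB b * ε b ω ^ 2 + ψB b * (ε b ω * ε (b + 1) ω)) *
          (θC c * ε c ω))
        = fun ω => θA a * θB b * θC c * (ε a ω * ε b ω * ε c ω)
            + (θA a * φB b * θC c * (ε a ω * ε b ω * ε b ω * ε c ω)
              + θA a * θC c * ψB b * (ε a ω * ε b ω * ε (b + 1) ω * ε c ω)) :=
      funext fun ω => by ring
    rw [hEq]
    exact I1.add (I2.add I3)
  -- value of each individual term
  have key : ∀ a ∈ Finset.range (n+1), ∀ b ∈ Finset.range (n+1), ∀ c ∈ Finset.range (n+1),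
      ∫ ω, θA a * ε a ω *
          (θB b * ε b ω + φB b * ε b ω ^ 2 + ψB b * (ε b ω * ε (b + 1) ω)) *
          (θC c * ε c ω) ∂μ
        = if a = c ∧ b ≠ a then θA a * θC a * φB b * (∫ ω, (ε 0 ω)^2 ∂μ)^2 else 0 := by
    intro a ha b hb c hc
    have ha' : a ≤ n := Finset.mem_range_succ_iff.mp ha
    have hb' : b ≤ n := Finset.mem_range_succ_iff.mp hb
    have hc' : c ≤ n := Finset.mem_range_succ_iff.mp hc
    by_cases hθ : θA a = 0
    · simp [hθ]
    · obtain ⟨hB0, hφ0, hψ0, hψ0'⟩ := hsep a ha' hθ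
      by_cases hba : b = a
      · subst hba
        simp [hB0, hφ0, hψ0]
      · -- main case : b ≠ a
        have I1 : Integrable (fun ω => θA a * θB b * θC c * (ε a ω * ε b ω * ε c ω)) μ :=
          (intM3 a ha' b hb' c hc').const_mul _
        have I2 : Integrable
            (fun ω => θA a * φB b * θC c * (ε a ω * ε b ω * ε b ω * ε c ω)) μ :=
          (intM4 a ha' b hb' b hb' c hc').const_mul _
        have I3 : Integrable (fun ω => θA a * θC c * ψB b *
            (ε a ω * ε b ω * ε (b + 1) ω * ε c ω)) μ := by
          by_cases hψ : ψB b = 0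
          · have h0 : (fun ω => θA a * θC c * ψB b * (ε a ω * ε b ω * ε (b + 1) ω * ε c ω))
                = fun _ => (0:ℝ) := funext fun ω => by rw [hψ]; ring
            rw [h0]; exact integrable_const 0
          · have hb1 : b + 1 ≤ n :=
              Nat.succ_le_of_lt (lt_of_le_of_ne hb' fun h => hψ (h ▸ hψB))
            exact (intM4 a ha' b hb' (b+1) hb1 c hc').const_mul _
        have hEq : (fun ω => θA a * ε a ω *
              (θB b * ε b ω + φB b * ε b ω ^ 2 + ψB b * (ε b ω * ε (b + 1) ω)) *
              (θC c * ε c ω))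
            = fun ω => θA a * θB b * θC c * (ε a ω * ε b ω * ε c ω)
                + (θA a * φB b * θC c * (ε a ω * ε b ω * ε b ω * ε c ω)
                  + θA a * θC c * ψB b * (ε a ω * ε b ω * ε (b + 1) ω * ε c ω)) :=
          funext fun ω => by ring
        have V1 : ∫ ω, θA a * θB b * θC c * (ε a ω * ε b ω * ε c ω) ∂μ = 0 := by
          by_cases hca : c = a
          · exact izero a ha' a ha' a ha' b hb' (Ne.symm hba) (Ne.symm hba) (Ne.symm hba)
              2 0 0 (θA a * θB b * θC c) _ (fun ω => by rw [hca]; ring)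
          · exact izero b hb' c hc' c hc' a ha' hba hca hca 1 1 0
              (θA a * θB b * θC c) _ (fun ω => by ring)
        have V3 : ∫ ω, θA a * θC c * ψB b * (ε a ω * ε b ω * ε (b + 1) ω * ε c ω) ∂μ = 0 := by
          by_cases hψ : ψB b = 0
          · have h0 : (fun ω => θA a * θC c * ψB b * (ε a ω * ε b ω * ε (b + 1) ω * ε c ω))
                = fun _ => (0:ℝ) := funext fun ω => by rw [hψ]; ring
            rw [h0]; simp
          · have hb1 : b + 1 ≤ n :=
              Nat.succ_le_of_lt (lt_of_le_of_ne hb' fun h => hψ (h ▸ hψB))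
            have hab1 : a ≠ b + 1 := fun h => hψ (by
              have h1 : 1 ≤ a := by omega
              have h2 := hψ0' h1
              rwa [show a - 1 = b by omega] at h2)
            by_cases hca : c = a
            · exact izero a ha' (b+1) hb1 (b+1) hb1 b hb' (Ne.symm hba)
                (Nat.succ_ne_self b) (Nat.succ_ne_self b) 2 1 0
                (θA a * θC c * ψB b) _ (fun ω => by rw [hca]; ring)
            · by_cases hcb : c = b
              · exact izero a ha' b hb' b hb' (b+1) hb1 hab1
                  (Ne.symm (Nat.succ_ne_self b)) (Ne.symm (Nat.succ_ne_self b))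
                  1 2 0 (θA a * θC c * ψB b) _ (fun ω => by rw [hcb]; ring)
              · by_cases hcb1 : c = b + 1
                · exact izero a ha' (b+1) hb1 (b+1) hb1 b hb' (Ne.symm hba)
                    (Nat.succ_ne_self b) (Nat.succ_ne_self b) 1 2 0
                    (θA a * θC c * ψB b) _ (fun ω => by rw [hcb1]; ring)
                · exact izero a ha' b hb' (b+1) hb1 c hc'
                    (fun h => hca h.symm) (fun h => hcb h.symm) (fun h => hcb1 h.symm)
                    1 1 1 (θA a * θC c * ψB b) _ (fun ω => by ring)
        have V2 : ∫ ω, θA a * φB b * θC c * (ε a ω * ε b ω * ε b ω * ε c ω) ∂μ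
            = if a = c then θA a * θC a * φB b * (∫ ω, (ε 0 ω)^2 ∂μ)^2 else 0 := by
          by_cases hca : a = c
          · rw [if_pos hca]
            have h := isq a ha' b hb' (Ne.symm hba) (θA a * φB b * θC c)
              (fun ω => θA a * φB b * θC c * (ε a ω * ε b ω * ε b ω * ε c ω))
              (fun ω => by rw [← hca]; ring)
            rw [h, hca]; ring
          · rw [if_neg hca]
            exact izero b hb' b hb' c hc' a ha' hba hba (fun h => hca h.symm)
              1 1 1 (θA a * φB b * θC c) _ (fun ω => by ring)
        have I23 : Integrable (fun ω => θA a * φB b * θC c * (ε a ω * ε b ω * ε b ω * ε c ω)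
            + θA a * θC c * ψB b * (ε a ω * ε b ω * ε (b + 1) ω * ε c ω)) μ := I2.add I3
        have E1 : ∫ ω, (θA a * θB b * θC c * (ε a ω * ε b ω * ε c ω)
              + (θA a * φB b * θC c * (ε a ω * ε b ω * ε b ω * ε c ω)
                + θA a * θC c * ψB b * (ε a ω * ε b ω * ε (b + 1) ω * ε c ω))) ∂μ
            = (∫ ω, θA a * θB b * θC c * (ε a ω * ε b ω * ε c ω) ∂μ)
              + ∫ ω, (θA a * φB b * θC c * (ε a ω * ε b ω * ε b ω * ε c ω)
                + θA a * θC c * ψB b * (ε a ω * ε b ω * ε (b + 1) ω * ε c ω)) ∂μ :=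
          integral_add I1 I23
        have E2 : ∫ ω, (θA a * φB b * θC c * (ε a ω * ε b ω * ε b ω * ε c ω)
              + θA a * θC c * ψB b * (ε a ω * ε b ω * ε (b + 1) ω * ε c ω)) ∂μ
            = (∫ ω, θA a * φB b * θC c * (ε a ω * ε b ω * ε b ω * ε c ω) ∂μ)
              + ∫ ω, θA a * θC c * ψB b * (ε a ω * ε b ω * ε (b + 1) ω * ε c ω) ∂μ :=
          integral_add I2 I3
        rw [hEq, E1, E2, V1, V2, V3, zero_add, add_zero]
        simp [hba]
  -- expand the product of sums and sum up
  simp only [Finset.sum_mul, Finset.mul_sum]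
  rw [integral_finset_sum _ (fun c hc => integrable_finset_sum _ (fun b hb =>
    integrable_finset_sum _ (fun a ha => hterm a (Finset.mem_range_succ_iff.mp ha)
      b (Finset.mem_range_succ_iff.mp hb) c (Finset.mem_range_succ_iff.mp hc))))]
  refine Finset.sum_eq_zero fun c hc => ?_
  rw [integral_finset_sum _ (fun b hb => integrable_finset_sum _ (fun a ha =>
    hterm a (Finset.mem_range_succ_iff.mp ha) b (Finset.mem_range_succ_iff.mp hb)
      c (Finset.mem_range_succ_iff.mp hc)))]
  rw [Finset.sum_congr rfl (fun b hb => integral_finset_sum _ (fun a ha =>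
    hterm a (Finset.mem_range_succ_iff.mp ha) b (Finset.mem_range_succ_iff.mp hb)
      c (Finset.mem_range_succ_iff.mp hc)))]
  rw [Finset.sum_congr rfl (fun b hb => Finset.sum_congr rfl (fun a ha =>
    key a ha b hb c hc))]
  simp only [ite_and]
  rw [Finset.sum_congr rfl (fun b _ => Finset.sum_ite_eq' (Finset.range (n+1)) c
    (fun a => if b ≠ a then θA a * θC a * φB b * (∫ ω, (ε 0 ω)^2 ∂μ)^2 else 0))]
  simp only [hc, if_true]
  by_cases hθ : θA c = 0
  · simp [hθ]
  · have hφ0 : φB c = 0 := (hsep c (Finset.mem_range_succ_iff.mp hc) hθ).2.1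
    have hW : ∀ b ∈ Finset.range (n+1),
        (if b ≠ c then θA c * θC c * φB b * (∫ ω, (ε 0 ω)^2 ∂μ)^2 else 0)
          = θA c * θC c * (∫ ω, (ε 0 ω)^2 ∂μ)^2 * φB b := by
      intro b _
      by_cases hbc : b = c
      · rw [hbc]; simp [hφ0]
      · rw [if_pos hbc]; ring
    rw [Finset.sum_congr rfl hW, ← Finset.mul_sum, hφB, mul_zero]
end
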